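/- arXiv:2401.10223 — 7 statements merged into one kernel-verified Lean document; each statement's English description precedes it below -/
import Mathlib

section
/- Let d ∈ ℕ and let G : ℝ^d → ℝ be locally Lipschitz. Let f : [0,∞) × ℝ^d → ℝ be jointly convex and jointly Lipschitz continuous, and assume that f(0,·) is continuously differentiable on ℝ^d. Assume that for every (t,x) ∈ (0,∞) × ℝ^d and every smooth function φ : (0,∞) × ℝ^d → ℝ such that f − φ has a strict local maximum at (t,x), one has ∂_t φ(t,x) − G(∇_x φ(t,x)) = 0. Then f is a viscosity solution of ∂_t f − G(∇_x f) = 0 on (0,∞) × ℝ^d, i.e. f is both a viscosity subsolution and a viscosity supersolution. -/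
open Filter Topology Set
open scoped RealInnerProductSpace

set_option linter.unusedSectionVars false
set_option synthInstance.maxHeartbeats 1000000
set_option maxHeartbeats 1000000

namespace Stmt0Main

variable {E : Type*} [NormedAddCommGroup E] [InnerProductSpace ℝ E] [FiniteDimensional ℝ E]





/-- Euclidean-type squared distance on `ℝ × E`. -/
def RQ (q p : ℝ × E) : ℝ := (q.1 - p.1)^2 + ‖q.2 - p.2‖^2

lemma RQ_nonneg (q p : ℝ × E) : 0 ≤ RQ q p :=
  add_nonneg (sq_nonneg _) (sq_nonneg _)

lemma RQ_self (p : ℝ × E) : RQ p p = 0 := by simp [RQ]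

lemma RQ_pos {q p : ℝ × E} (h : q ≠ p) : 0 < RQ q p := by
  rcases lt_or_eq_of_le (RQ_nonneg q p) with h1 | h1
  · exact h1
  · exfalso; apply h
    have h1 : (q.1 - p.1)^2 + ‖q.2 - p.2‖^2 = 0 := by simpa [RQ] using h1.symm
    have e2 : q.1 = p.1 := by nlinarith [sq_nonneg (q.1 - p.1), sq_nonneg ‖q.2 - p.2‖]
    have e3 : q.2 = p.2 := by
      have hn : ‖q.2 - p.2‖ = 0 := by nlinarith [sq_nonneg (q.1 - p.1), norm_nonneg (q.2 - p.2)]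
      simpa [sub_eq_zero] using norm_eq_zero.mp hn
    exact Prod.ext e2 e3

lemma dist_le_sqrt_RQ (q p : ℝ × E) : dist q p ≤ Real.sqrt (RQ q p) := by
  rw [Prod.dist_eq]
  have h1 : dist q.1 p.1 ≤ Real.sqrt (RQ q p) := by
    rw [Real.dist_eq]
    have : |q.1 - p.1| = Real.sqrt ((q.1 - p.1)^2) := (Real.sqrt_sq_eq_abs _).symm
    rw [this]
    exact Real.sqrt_le_sqrt (le_add_of_nonneg_right (sq_nonneg _))
  have h2 : dist q.2 p.2 ≤ Real.sqrt (RQ q p) := by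
    rw [dist_eq_norm]
    have : ‖q.2 - p.2‖ = Real.sqrt (‖q.2 - p.2‖^2) := by
      rw [Real.sqrt_sq (norm_nonneg _)]
    rw [this]
    exact Real.sqrt_le_sqrt (le_add_of_nonneg_left (sq_nonneg _))
  exact max_le h1 h2

lemma RQ_smul (p u : ℝ × E) (s : ℝ) : RQ (p + s • u) p = s^2 * RQ u 0 := by
  simp only [RQ, Prod.fst_add, Prod.smul_fst, Prod.snd_add, Prod.smul_snd, smul_eq_mul,
    Prod.fst_zero, Prod.snd_zero, sub_zero, add_sub_cancel_left]
  rw [norm_smul]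
  simp [mul_pow]
  ring

/-- expansion identity for the sup-convolution argument -/
lemma RQ_expand (q p a : ℝ × E) :
    RQ q a - RQ p a = RQ q p + 2*((p.1 - a.1)*(q.1 - p.1) + ⟪p.2 - a.2, q.2 - p.2⟫) := by
  have h2 : ‖q.2 - a.2‖^2 = ‖q.2 - p.2‖^2 + 2*⟪q.2 - p.2, p.2 - a.2⟫ + ‖p.2 - a.2‖^2 := by
    have := norm_add_sq_real (q.2 - p.2) (p.2 - a.2)
    simpa [sub_add_sub_cancel] using this
  simp only [RQ]
  rw [h2, real_inner_comm]
  ring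







/-- the canonical test function -/
def tf (α : ℝ) (β : E) (M : ℝ) (p : ℝ × E) : ℝ × E → ℝ :=
  fun q => α * q.1 + ⟪β, q.2⟫ + M * RQ q p

lemma tf_contDiff (α : ℝ) (β : E) (M : ℝ) (p : ℝ × E) : ContDiff ℝ (⊤ : ℕ∞) (tf α β M p) := by
  unfold tf RQ
  apply ContDiff.add
  apply ContDiff.add
  · exact (contDiff_const.mul contDiff_fst)
  · exact (innerSL ℝ β).contDiff.comp contDiff_snd
  · apply ContDiff.mul contDiff_const
    apply ContDiff.add
    · exact (contDiff_fst.sub contDiff_const).pow 2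
    · exact ContDiff.norm_sq (𝕜 := ℝ) (contDiff_snd.sub contDiff_const)

lemma tf_deriv (α : ℝ) (β : E) (M : ℝ) (p : ℝ × E) :
    deriv (fun s => tf α β M p (s, p.2)) p.1 = α := by
  have h : ∀ s : ℝ, tf α β M p (s, p.2) = α * s + ⟪β, p.2⟫ + M * (s - p.1)^2 := by
    intro s; simp [tf, RQ]
  rw [show (fun s => tf α β M p (s, p.2)) = fun s => α * s + ⟪β, p.2⟫ + M * (s - p.1)^2 from
    funext h]
  have h1 : HasDerivAt (fun s : ℝ => α * s + ⟪β, p.2⟫ + M * (s - p.1)^2)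
      (α + M * (2 * (p.1 - p.1))) p.1 := by
    have ha : HasDerivAt (fun s : ℝ => α * s) α p.1 := by
      simpa using (hasDerivAt_id p.1).const_mul α
    have hb : HasDerivAt (fun s : ℝ => (s - p.1)^2) (2 * (p.1 - p.1)) p.1 := by
      have := ((hasDerivAt_id p.1).sub_const p.1).fun_pow 2
      simpa [mul_comm] using this
    simpa using (ha.add_const _).fun_add (hb.const_mul M)
  rw [h1.deriv]; ring

lemma tf_gradient (α : ℝ) (β : E) (M : ℝ) (p : ℝ × E) :
    gradient (fun y => tf α β M p (p.1, y)) p.2 = β := by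
  have h : (fun y => tf α β M p (p.1, y)) =
      fun y => α * p.1 + ⟪β, y⟫ + M * ((p.1 - p.1)^2 + ‖y - p.2‖^2) := by
    funext y; simp [tf, RQ]
  rw [h]
  have h1 : HasFDerivAt (fun y : E => α * p.1 + ⟪β, y⟫ + M * ((p.1 - p.1)^2 + ‖y - p.2‖^2))
      (InnerProductSpace.toDual ℝ E β) p.2 := by
    have ha : HasFDerivAt (fun y : E => ⟪β, y⟫) (innerSL ℝ β) p.2 :=
      (innerSL ℝ β).hasFDerivAt
    have hb : HasFDerivAt (fun y : E => ‖y - p.2‖^2)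
        ((2:ℝ) • (innerSL ℝ ((p.2 - p.2))).comp (ContinuousLinearMap.id ℝ E)) p.2 := by
      have h0 : HasFDerivAt (fun y : E => y - p.2) (ContinuousLinearMap.id ℝ E) p.2 :=
        (hasFDerivAt_id p.2).sub_const p.2
      simpa using h0.norm_sq
    have hb' : HasFDerivAt (fun y : E => ‖y - p.2‖^2) (0 : E →L[ℝ] ℝ) p.2 := by
      convert hb using 1
      ext v
      simp
    have hc : HasFDerivAt (fun y : E => (p.1 - p.1)^2 + ‖y - p.2‖^2) (0 : E →L[ℝ] ℝ) p.2 := by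
      have := hb'.const_add ((p.1 - p.1)^2)
      simpa using this
    have := (ha.const_add (α * p.1)).add (hc.const_mul M)
    refine this.congr_fderiv ?_
    ext v
    simp [InnerProductSpace.toDual_apply_apply]
  have h2 : HasGradientAt (fun y : E => α * p.1 + ⟪β, y⟫ + M * ((p.1 - p.1)^2 + ‖y - p.2‖^2))
      β p.2 := (hasGradientAt_iff_hasFDerivAt).mpr h1
  exact h2.gradient

/-- partial derivative representation for a jointly differentiable function -/
lemma partial_deriv {φ : ℝ × E → ℝ} {L : (ℝ × E) →L[ℝ] ℝ} {t : ℝ} {x : E}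
    (h : HasFDerivAt φ L (t, x)) :
    HasDerivAt (fun s => φ (s, x)) (L (1, 0)) t := by
  have hline : HasDerivAt (fun s : ℝ => ((s, x) : ℝ × E)) (1, 0) t := by
    exact (hasDerivAt_id t).prodMk (hasDerivAt_const t x)
  exact h.comp_hasDerivAt t hline

lemma partial_grad {φ : ℝ × E → ℝ} {L : (ℝ × E) →L[ℝ] ℝ} {t : ℝ} {x : E}
    (h : HasFDerivAt φ L (t, x)) :
    HasGradientAt (fun y => φ (t, y)) ((InnerProductSpace.toDual ℝ E).symm
      (L.comp (ContinuousLinearMap.inr ℝ ℝ E))) x := by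
  rw [hasGradientAt_iff_hasFDerivAt]
  have hline : HasFDerivAt (fun y : E => ((t, y) : ℝ × E))
      (ContinuousLinearMap.inr ℝ ℝ E) x := (hasFDerivAt_const t x).prodMk (hasFDerivAt_id x)
  have := h.comp x hline
  refine this.congr_fderiv ?_
  simp

lemma toDual_symm_pair {L : (ℝ × E) →L[ℝ] ℝ} (σ : ℝ) (v : E) :
    L (σ, v) = σ * (L (1, 0)) +
      ⟪(InnerProductSpace.toDual ℝ E).symm (L.comp (ContinuousLinearMap.inr ℝ ℝ E)), v⟫ := by
  rw [InnerProductSpace.toDual_symm_apply]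
  have : (σ, v) = σ • ((1:ℝ), (0:E)) + ((0:ℝ), v) := by simp
  rw [this, L.map_add, L.map_smul]
  simp









lemma RQ_smul_pt (p u : ℝ × E) (s : ℝ) : RQ (p + s • u) p = s^2 * ((u.1)^2 + ‖u.2‖^2) := by
  simp only [RQ, Prod.fst_add, Prod.smul_fst, Prod.snd_add, Prod.smul_snd, smul_eq_mul,
    add_sub_cancel_left]
  rw [norm_smul]
  simp [mul_pow]
  ring

/-- A quadratic upper touch of a convex function at an interior point gives a (global)
subgradient inequality. -/
lemma sub_of_upper {f : ℝ × E → ℝ}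
    (hconv : ConvexOn ℝ {p : ℝ × E | 0 ≤ p.1} f) {p : ℝ × E} (hp : 0 < p.1)
    {α M : ℝ} {β : E} (hM : 0 ≤ M)
    (h : ∀ q : ℝ × E, 0 ≤ q.1 → f q ≤ f p + (α*(q.1-p.1) + ⟪β, q.2-p.2⟫) + M * RQ q p) :
    ∀ q : ℝ × E, 0 ≤ q.1 → f p + (α*(q.1-p.1) + ⟪β, q.2-p.2⟫) ≤ f q := by
  intro q hq
  set u : ℝ × E := q - p with hu
  have hu1 : u.1 = q.1 - p.1 := rfl
  have hu2 : u.2 = q.2 - p.2 := rfl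
  set c : ℝ := α * u.1 + ⟪β, u.2⟫ with hc
  set M₂ : ℝ := M * ((u.1)^2 + ‖u.2‖^2) with hM₂
  have hM₂0 : 0 ≤ M₂ := mul_nonneg hM (by positivity)
  rw [← hu1, ← hu2, ← hc]
  have key : ∀ ε : ℝ, 0 < ε → f p + c ≤ f q + ε := by
    intro ε hε
    set δ : ℝ := p.1 / (|u.1| + 1) with hδ
    have hδ0 : 0 < δ := by positivity
    have hδid : δ * (|u.1| + 1) = p.1 := by
      rw [hδ]; field_simp
    set s : ℝ := -min δ (ε/(M₂+1)) with hs
    have hs0 : s < 0 := by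
      have : 0 < min δ (ε/(M₂+1)) := lt_min hδ0 (by positivity)
      simp only [hs]; linarith
    have hsabs1 : -s ≤ δ := by
      have := min_le_left δ (ε/(M₂+1)); simp only [hs, neg_neg]; linarith
    have hsabs2 : -s ≤ ε/(M₂+1) := by
      have := min_le_right δ (ε/(M₂+1)); simp only [hs, neg_neg]; linarith
    clear hs
    clear_value s
    set ps : ℝ × E := p + s • u with hps
    have hps1 : ps.1 = p.1 + s * u.1 := rfl
    have hpsC : 0 ≤ ps.1 := by
      rw [hps1]
      have h1 : -((-s) * |u.1|) ≤ s * u.1 := by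
        have habs : |s * u.1| ≤ (-s) * |u.1| := by
          rw [abs_mul, abs_of_neg hs0]
        linarith [neg_abs_le (s * u.1)]
      have h2 : (-s) * |u.1| ≤ δ * |u.1| :=
        mul_le_mul_of_nonneg_right hsabs1 (abs_nonneg _)
      nlinarith [abs_nonneg u.1]
    -- upper touch at ps
    have htouch : f ps ≤ f p + s * c + M₂ * s^2 := by
      have := h ps hpsC
      have e1 : ps.1 - p.1 = s * u.1 := by rw [hps1]; ring
      have e2 : ps.2 - p.2 = s • u.2 := by
        simp [hps]
      have e3 : RQ ps p = s^2 * ((u.1)^2 + ‖u.2‖^2) := RQ_smul_pt p u s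
      rw [e1, e2, e3, real_inner_smul_right] at this
      calc f ps ≤ f p + (α * (s * u.1) + s * ⟪β, u.2⟫) + M * (s^2 * ((u.1)^2 + ‖u.2‖^2)) := this
        _ = f p + s * c + M₂ * s^2 := by rw [hc, hM₂]; ring
    -- convexity: p is a combination of q and ps
    have h1s : (0:ℝ) < 1 - s := by linarith
    set a : ℝ := -s/(1-s) with ha
    set b : ℝ := 1/(1-s) with hb
    have ha0 : 0 ≤ a := div_nonneg (by linarith) (le_of_lt h1s)
    have hb0 : 0 ≤ b := by positivity
    have hab : a + b = 1 := by rw [ha, hb]; field_simp; ring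
    have hcomb : a • q + b • ps = p := by
      rw [hps, hu, ha, hb]
      have hne : (1:ℝ) - s ≠ 0 := ne_of_gt h1s
      match_scalars <;> (field_simp; try ring)
    have hconvineq : f p ≤ a * f q + b * f ps := by
      have := hconv.2 (mem_setOf.mpr hq) (mem_setOf.mpr hpsC) ha0 hb0 hab
      rw [hcomb] at this
      exact this
    -- combine
    have hmul : (1-s) * f p ≤ (-s) * f q + f ps := by
      have := mul_le_mul_of_nonneg_left hconvineq (le_of_lt h1s)
      have e : (1-s) * (a * f q + b * f ps) = (-s) * f q + f ps := by
        rw [ha, hb]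
        field_simp
      linarith [this, e.le, e.ge]
    -- (-s) * (f q - f p - c - M₂ * s) ≥ 0
    have hfinal : 0 ≤ f q - f p - c - M₂ * s := by
      have hprod : 0 ≤ (-s) * (f q - f p - c - M₂ * s) := by nlinarith [hmul, htouch]
      have := (mul_nonneg_iff_of_pos_left (by linarith : (0:ℝ) < -s)).mp hprod
      exact this
    have hMs : -(M₂ * s) ≤ ε := by
      have h1 : M₂ * (-s) ≤ M₂ * (ε/(M₂+1)) := mul_le_mul_of_nonneg_left hsabs2 hM₂0
      have h2 : M₂ * (ε/(M₂+1)) ≤ ε := by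
        rw [mul_div_assoc']
        rw [div_le_iff₀ (by linarith : (0:ℝ) < M₂ + 1)]
        nlinarith
      nlinarith [h1, h2]
    linarith
  by_contra hcon
  push_neg at hcon
  have := key ((f p + c - f q)/2) (by linarith)
  linarith

/-- A local minimum of `f - φ` with `φ` differentiable gives a global subgradient of the
convex function `f` on the half-space. -/
lemma sub_of_localmin {f φ : ℝ × E → ℝ}
    (hconv : ConvexOn ℝ {p : ℝ × E | 0 ≤ p.1} f) {z : ℝ × E} (hz : 0 < z.1)
    {L : (ℝ × E) →L[ℝ] ℝ} (hφ : HasFDerivAt φ L z)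
    (hmin : IsLocalMin (fun p => f p - φ p) z) :
    ∀ q : ℝ × E, 0 ≤ q.1 → f z + L (q - z) ≤ f q := by
  intro q hq
  set u : ℝ × E := q - z with hu
  -- derivative of φ along the segment
  have hline : HasDerivAt (fun s : ℝ => z + s • u) u 0 := by
    have h1 : HasDerivAt (fun s : ℝ => s • u) ((1:ℝ) • u) 0 := (hasDerivAt_id 0).smul_const u
    simpa using h1.const_add z
  have hcomp : HasDerivAt (fun s : ℝ => φ (z + s • u)) (L u) 0 := by
    have hφ' : HasFDerivAt φ L ((fun s : ℝ => z + s • u) 0) := by simpa using hφ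
    exact hφ'.comp_hasDerivAt 0 hline
  have hslope : Tendsto (fun s : ℝ => (φ (z + s • u) - φ z) / s) (𝓝[>] (0:ℝ)) (𝓝 (L u)) := by
    have h1 := hasDerivAt_iff_tendsto_slope.mp hcomp
    have h2 : Tendsto (slope (fun s : ℝ => φ (z + s • u)) 0) (𝓝[>] (0:ℝ)) (𝓝 (L u)) :=
      h1.mono_left (nhdsWithin_mono 0 (fun x hx => ne_of_gt hx))
    have e : ∀ s : ℝ, slope (fun s : ℝ => φ (z + s • u)) 0 s
        = (φ (z + s • u) - φ z) / s := by
      intro s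
      rw [slope_def_field]
      simp [div_eq_inv_mul]
    have e' : (fun s : ℝ => slope (fun s' : ℝ => φ (z + s' • u)) 0 s)
        = fun s : ℝ => (φ (z + s • u) - φ z) / s := funext e
    rw [← e']
    exact h2
  -- eventual inequality
  have hev : ∀ᶠ s in 𝓝[>] (0:ℝ), (φ (z + s • u) - φ z) / s ≤ f q - f z := by
    have htend : Tendsto (fun s : ℝ => z + s • u) (𝓝[>] (0:ℝ)) (𝓝 z) := by
      have : Tendsto (fun s : ℝ => z + s • u) (𝓝 (0:ℝ)) (𝓝 (z + (0:ℝ) • u)) := by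
        apply Continuous.tendsto
        exact continuous_const.add (continuous_id.smul continuous_const)
      simp only [zero_smul, add_zero] at this
      exact this.mono_left nhdsWithin_le_nhds
    have hminev : ∀ᶠ s in 𝓝[>] (0:ℝ),
        f z - φ z ≤ f (z + s • u) - φ (z + s • u) := htend.eventually hmin
    have hsmall : ∀ᶠ s in 𝓝[>] (0:ℝ), s ∈ Ioc (0:ℝ) 1 :=
      Ioc_mem_nhdsGT zero_lt_one
    filter_upwards [hminev, hsmall] with s hsmin hs
    obtain ⟨hs0, hs1⟩ := hs
    -- convexity bound
    have hcvx : f (z + s • u) ≤ (1 - s) * f z + s * f q := by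
      have hcomb : (1 - s) • z + s • q = z + s • u := by
        rw [hu]; match_scalars <;> ring
      have := hconv.2 (mem_setOf.mpr (le_of_lt hz)) (mem_setOf.mpr hq)
        (by linarith : (0:ℝ) ≤ 1 - s) (le_of_lt hs0) (by ring)
      rw [hcomb] at this
      exact this
    have e1 : φ (z + s • u) - φ z ≤ f (z + s • u) - f z := by linarith
    have e2 : f (z + s • u) - f z ≤ s * (f q - f z) := by nlinarith
    rw [div_le_iff₀ hs0]
    nlinarith
  have hlim : L u ≤ f q - f z := le_of_tendsto hslope hev
  have : L (q - z) = L u := by rw [hu]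
  linarith


lemma lip_sqrt {f : ℝ × E → ℝ} {K : NNReal}
    (hlip : LipschitzOnWith K f {p : ℝ × E | 0 ≤ p.1})
    {q p : ℝ × E} (hq : 0 ≤ q.1) (hp : 0 ≤ p.1) :
    f q - f p ≤ (K:ℝ) * Real.sqrt (RQ q p) := by
  have h1 : dist (f q) (f p) ≤ (K:ℝ) * dist q p :=
    hlip.dist_le_mul q (mem_setOf.mpr hq) p (mem_setOf.mpr hp)
  have h2 : f q - f p ≤ dist (f q) (f p) := by
    rw [Real.dist_eq]; exact le_abs_self _
  have h3 : (K:ℝ) * dist q p ≤ (K:ℝ) * Real.sqrt (RQ q p) :=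
    mul_le_mul_of_nonneg_left (dist_le_sqrt_RQ q p) K.coe_nonneg
  linarith

lemma interior_touch {G : E → ℝ} {f : ℝ × E → ℝ} {K : NNReal}
    (hconv : ConvexOn ℝ {p : ℝ × E | 0 ≤ p.1} f)
    (hlip : LipschitzOnWith K f {p : ℝ × E | 0 ≤ p.1})
    (hcrit : ∀ (t : ℝ) (x : E), 0 < t →
      ∀ φ : ℝ × E → ℝ,
        ContDiffOn ℝ (⊤ : ℕ∞) φ {p : ℝ × E | 0 < p.1} →
        (∃ U ∈ 𝓝 ((t, x) : ℝ × E),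
          ∀ q ∈ U, q ≠ (t, x) → f q - φ q < f (t, x) - φ (t, x)) →
        deriv (fun s => φ (s, x)) t - G (gradient (fun y => φ (t, y)) x) = 0)
    {q₀ : ℝ × E} (hq₀ : 0 < q₀.1) {lam : ℝ} (hlam : 0 < lam)
    (hsmall : 2*lam*(K:ℝ) < q₀.1) :
    ∃ (p : ℝ × E) (β : E), 0 < p.1 ∧ RQ p q₀ ≤ (2*lam*(K:ℝ))^2 ∧
      |G β| ≤ 2*(K:ℝ) ∧ ‖β‖ ≤ 2*(K:ℝ) ∧
      (∀ q : ℝ × E, 0 ≤ q.1 → f p + ((G β)*(q.1-p.1) + ⟪β, q.2-p.2⟫) ≤ f q) := by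
  set Kr : ℝ := (K:ℝ) with hKr
  have hKr0 : 0 ≤ Kr := K.coe_nonneg
  set R : ℝ := 2*lam*Kr + 1 with hR
  have hR0 : 0 < R := by positivity
  set S : Set (ℝ × E) := {p : ℝ × E | 0 ≤ p.1} ∩ Metric.closedBall q₀ R with hS
  have hCclosed : IsClosed {p : ℝ × E | 0 ≤ p.1} :=
    isClosed_le continuous_const continuous_fst
  have hSc : IsCompact S := (isCompact_closedBall q₀ R).inter_left hCclosed
  have hq₀S : q₀ ∈ S := ⟨le_of_lt hq₀, Metric.mem_closedBall_self (le_of_lt hR0)⟩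
  have hFcont : ContinuousOn (fun q : ℝ × E => f q - RQ q q₀/(2*lam)) S := by
    apply ContinuousOn.sub
    · exact (hlip.continuousOn).mono inter_subset_left
    · apply Continuous.continuousOn
      apply Continuous.div_const
      exact (((continuous_fst.sub continuous_const).pow 2).add
        (((continuous_snd.sub continuous_const)).norm.pow 2))
  obtain ⟨p, hpS, hmax⟩ := hSc.exists_isMaxOn ⟨q₀, hq₀S⟩ hFcont
  have hpC : (0:ℝ) ≤ p.1 := hpS.1
  have hglob : ∀ q : ℝ × E, 0 ≤ q.1 →
      f q - RQ q q₀/(2*lam) ≤ f p - RQ p q₀/(2*lam) := by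
    intro q hq
    by_cases hball : q ∈ Metric.closedBall q₀ R
    · exact hmax ⟨hq, hball⟩
    · have hd : R < dist q q₀ := by
        simp only [Metric.mem_closedBall, not_le] at hball; exact hball
      have hs : R < Real.sqrt (RQ q q₀) := lt_of_lt_of_le hd (dist_le_sqrt_RQ q q₀)
      have h1 : f q - f q₀ ≤ Kr * Real.sqrt (RQ q q₀) := lip_sqrt hlip hq (le_of_lt hq₀)
      have hneg : Kr * Real.sqrt (RQ q q₀) - RQ q q₀/(2*lam) < 0 := by
        have hsq : RQ q q₀ = (Real.sqrt (RQ q q₀))^2 := (Real.sq_sqrt (RQ_nonneg _ _)).symm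
        set s : ℝ := Real.sqrt (RQ q q₀) with hsdef
        have hspos : 0 < s := lt_trans hR0 hs
        rw [hsq]
        have hfact : Kr * s - s^2/(2*lam) = s * (Kr - s/(2*lam)) := by
          field_simp
        rw [hfact]
        apply mul_neg_of_pos_of_neg hspos
        have : Kr < s/(2*lam) := by
          rw [lt_div_iff₀ (by positivity : (0:ℝ) < 2*lam)]
          calc Kr * (2*lam) = 2*lam*Kr := by ring
            _ < R := by rw [hR]; linarith
            _ < s := hs
        linarith
      have hF0 : f q₀ - RQ q₀ q₀/(2*lam) ≤ f p - RQ p q₀/(2*lam) := hmax hq₀S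
      rw [RQ_self] at hF0
      rw [zero_div, sub_zero] at hF0
      linarith
    -- done hglob
  have hb1 : RQ p q₀/(2*lam) ≤ f p - f q₀ := by
    have := hglob q₀ (le_of_lt hq₀)
    rw [RQ_self] at this
    have h2lam : (0:ℝ)/(2*lam) = 0 := by simp
    linarith [this]
  have hb2 : f p - f q₀ ≤ Kr * Real.sqrt (RQ p q₀) := lip_sqrt hlip hpC (le_of_lt hq₀)
  have hsb : Real.sqrt (RQ p q₀) ≤ 2*lam*Kr := by
    set s : ℝ := Real.sqrt (RQ p q₀) with hsdef
    have hs0 : 0 ≤ s := Real.sqrt_nonneg _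
    have hsq : RQ p q₀ = s^2 := (Real.sq_sqrt (RQ_nonneg _ _)).symm
    have h3 : s^2/(2*lam) ≤ Kr * s := by rw [hsq] at hb1; linarith
    rcases eq_or_lt_of_le hs0 with h|h
    · rw [← h]; positivity
    · have h4 : s^2 ≤ Kr * s * (2*lam) := by
        rw [div_le_iff₀ (by positivity : (0:ℝ) < 2*lam)] at h3; linarith
      nlinarith
  have hRQb : RQ p q₀ ≤ (2*lam*Kr)^2 := by
    have h1 : RQ p q₀ = (Real.sqrt (RQ p q₀))^2 := (Real.sq_sqrt (RQ_nonneg _ _)).symm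
    rw [h1]
    exact pow_le_pow_left₀ (Real.sqrt_nonneg _) hsb 2
  have habs1 : |p.1 - q₀.1| ≤ 2*lam*Kr := by
    have h1 : |p.1 - q₀.1| ≤ Real.sqrt (RQ p q₀) := by
      rw [← Real.sqrt_sq_eq_abs]
      exact Real.sqrt_le_sqrt (le_add_of_nonneg_right (sq_nonneg _))
    linarith
  have habs2 : ‖p.2 - q₀.2‖ ≤ 2*lam*Kr := by
    have h1 : ‖p.2 - q₀.2‖ ≤ Real.sqrt (RQ p q₀) := by
      rw [← Real.sqrt_sq (norm_nonneg (p.2 - q₀.2))]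
      exact Real.sqrt_le_sqrt (le_add_of_nonneg_left (sq_nonneg _))
    linarith
  have hp1 : 0 < p.1 := by
    have := abs_le.mp habs1
    linarith [this.1]
  set α : ℝ := (p.1 - q₀.1)/lam with hα
  set β : E := lam⁻¹ • (p.2 - q₀.2) with hβ
  have hαb : |α| ≤ 2*Kr := by
    rw [hα, abs_div, abs_of_pos hlam, div_le_iff₀ hlam]
    calc |p.1 - q₀.1| ≤ 2*lam*Kr := habs1
      _ = 2*Kr*lam := by ring
  have hβb : ‖β‖ ≤ 2*Kr := by
    rw [hβ, norm_smul, norm_inv, Real.norm_eq_abs, abs_of_pos hlam]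
    rw [inv_mul_le_iff₀ hlam]
    calc ‖p.2 - q₀.2‖ ≤ 2*lam*Kr := habs2
      _ = lam * (2*Kr) := by ring
  -- the quadratic upper touch
  have htouch : ∀ q : ℝ × E, 0 ≤ q.1 →
      f q ≤ f p + (α*(q.1-p.1) + ⟪β, q.2-p.2⟫) + (1/(2*lam)) * RQ q p := by
    intro q hq
    have h0 := hglob q hq
    have hexp := RQ_expand q p q₀
    have h1 : f q ≤ f p + (RQ q q₀ - RQ p q₀)/(2*lam) := by
      have e : (RQ q q₀ - RQ p q₀)/(2*lam) = RQ q q₀/(2*lam) - RQ p q₀/(2*lam) := by ring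
      rw [e]; linarith
    rw [hexp] at h1
    have hβin : ⟪β, q.2-p.2⟫ = lam⁻¹ * ⟪p.2 - q₀.2, q.2 - p.2⟫ := by
      rw [hβ, real_inner_smul_left]
    have e2 : (RQ q p + 2*((p.1 - q₀.1)*(q.1 - p.1) + ⟪p.2 - q₀.2, q.2 - p.2⟫))/(2*lam)
        = (α*(q.1-p.1) + lam⁻¹ * ⟪p.2 - q₀.2, q.2 - p.2⟫) + (1/(2*lam)) * RQ q p := by
      rw [hα]; field_simp; ring
    rw [e2] at h1
    rw [hβin]
    linarith
  -- the equation at p via hcrit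
  have heq : α = G β := by
    have hstrict : ∀ q : ℝ × E, q ∈ {q : ℝ × E | 0 < q.1} → q ≠ p →
        f q - tf α β (1/(2*lam) + 1) p q < f p - tf α β (1/(2*lam) + 1) p p := by
      intro q hqU hqne
      have h1 := htouch q (le_of_lt hqU)
      have hRQpos : 0 < RQ q p := RQ_pos hqne
      have e1 : tf α β (1/(2*lam) + 1) p q
          = α * q.1 + ⟪β, q.2⟫ + (1/(2*lam) + 1) * RQ q p := rfl
      have e2 : tf α β (1/(2*lam) + 1) p p = α * p.1 + ⟪β, p.2⟫ := by
        simp [tf, RQ_self]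
      have hinner : ⟪β, q.2 - p.2⟫ = ⟪β, q.2⟫ - ⟪β, p.2⟫ := inner_sub_right β q.2 p.2
      rw [e1, e2]
      rw [hinner] at h1
      have hexpand : (1/(2*lam) + 1) * RQ q p = (1/(2*lam)) * RQ q p + RQ q p := by ring
      rw [hexpand]
      linarith
    have hU : {q : ℝ × E | 0 < q.1} ∈ 𝓝 ((p.1, p.2) : ℝ × E) := by
      apply IsOpen.mem_nhds (isOpen_lt continuous_const continuous_fst)
      exact hp1
    have hcd : ContDiffOn ℝ (⊤ : ℕ∞) (tf α β (1/(2*lam) + 1) p) {q : ℝ × E | 0 < q.1} :=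
      (tf_contDiff α β (1/(2*lam) + 1) p).contDiffOn
    have happ := hcrit p.1 p.2 hp1 (tf α β (1/(2*lam) + 1) p) hcd
      ⟨{q : ℝ × E | 0 < q.1}, hU, by
        intro q hqU hqne
        have hqne' : q ≠ p := by
          intro hcon; apply hqne; rw [hcon]
        exact hstrict q hqU hqne'⟩
    have hd := tf_deriv α β (1/(2*lam) + 1) p
    have hg := tf_gradient α β (1/(2*lam) + 1) p
    rw [hd, hg] at happ
    linarith
  -- conclude
  have hsub := sub_of_upper hconv hp1 (by positivity : (0:ℝ) ≤ 1/(2*lam)) htouch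
  refine ⟨p, β, hp1, ?_, ?_, hβb, ?_⟩
  · rw [hKr] at hRQb; exact hRQb
  · rw [← heq]; rw [hKr] at hαb; exact hαb
  · intro q hq
    have := hsub q hq
    rw [← heq]
    exact this

lemma boundary_subgrad {G : E → ℝ} {f : ℝ × E → ℝ} {K : NNReal}
    (hG : LocallyLipschitz G)
    (hconv : ConvexOn ℝ {p : ℝ × E | 0 ≤ p.1} f)
    (hlip : LipschitzOnWith K f {p : ℝ × E | 0 ≤ p.1})
    (hcrit : ∀ (t : ℝ) (x : E), 0 < t →
      ∀ φ : ℝ × E → ℝ,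
        ContDiffOn ℝ (⊤ : ℕ∞) φ {p : ℝ × E | 0 < p.1} →
        (∃ U ∈ 𝓝 ((t, x) : ℝ × E),
          ∀ q ∈ U, q ≠ (t, x) → f q - φ q < f (t, x) - φ (t, x)) →
        deriv (fun s => φ (s, x)) t - G (gradient (fun y => φ (t, y)) x) = 0)
    {y g₀ : E} (hg : HasGradientAt (fun v => f (0, v)) g₀ y) :
    ∀ q : ℝ × E, 0 ≤ q.1 → f (0, y) + ((G g₀) * q.1 + ⟪g₀, q.2 - y⟫) ≤ f q := by
  set Kr : ℝ := (K:ℝ) with hKrdef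
  have hKr0 : 0 ≤ Kr := K.coe_nonneg
  set c : ℝ := (2*Kr+1)⁻¹ with hcdef
  have hc0 : 0 < c := by positivity
  set hs : ℕ → ℝ := fun n => c/(n+1) with hsdef
  have hhpos : ∀ n : ℕ, 0 < hs n := by
    intro n; apply div_pos hc0; positivity
  have hhle : ∀ n : ℕ, hs n ≤ c := by
    intro n
    apply div_le_self (le_of_lt hc0)
    have : (0:ℝ) ≤ (n:ℝ) := Nat.cast_nonneg n
    linarith
  have hsmalln : ∀ n : ℕ, 2*((hs n)^2)*Kr < hs n := by
    intro n
    have h1 : 2*(hs n)*Kr ≤ 2*c*Kr := by nlinarith [hhpos n, hhle n]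
    have h2 : 2*c*Kr < 1 := by
      rw [hcdef]
      rw [mul_comm 2 (2*Kr+1)⁻¹, mul_assoc]
      rw [inv_mul_lt_iff₀ (by positivity : (0:ℝ) < 2*Kr+1)]
      linarith
    nlinarith [hhpos n]
  have hex : ∀ n : ℕ, ∃ (p : ℝ × E) (β : E), 0 < p.1 ∧
      RQ p (hs n, y) ≤ (2*((hs n)^2)*Kr)^2 ∧
      |G β| ≤ 2*Kr ∧ ‖β‖ ≤ 2*Kr ∧
      (∀ q : ℝ × E, 0 ≤ q.1 → f p + ((G β)*(q.1-p.1) + ⟪β, q.2-p.2⟫) ≤ f q) := by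
    intro n
    have := interior_touch hconv hlip hcrit
      (q₀ := ((hs n, y) : ℝ × E)) (by simpa using hhpos n)
      (lam := (hs n)^2) (by positivity) (by simpa using hsmalln n)
    obtain ⟨p, β, h1, h2, h3, h4, h5⟩ := this
    exact ⟨p, β, h1, h2, h3, h4, h5⟩
  choose p β hp1 hRQ hGb hβb hsub using hex
  -- convergence of the points p n to (0, y)
  have hh0 : Tendsto hs atTop (𝓝 0) := by
    rw [hsdef]
    have h1 : Tendsto (fun n : ℕ => c/(n:ℝ)) atTop (𝓝 0) :=
      tendsto_const_div_atTop_nhds_zero_nat c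
    have h2 := h1.comp (tendsto_add_atTop_nat 1)
    have e : (fun n : ℕ => c/((n+1:ℕ):ℝ)) = fun n : ℕ => c/((n:ℝ)+1) := by
      funext n; push_cast; ring_nf
    rw [← e]
    exact h2
  have hptend : Tendsto (fun n => p n) atTop (𝓝 ((0:ℝ), y)) := by
    rw [tendsto_iff_dist_tendsto_zero]
    apply squeeze_zero (fun n => dist_nonneg)
      (g := fun n => 2*((hs n)^2)*Kr + hs n)
    · intro n
      have htri : dist (p n) ((0:ℝ), y) ≤ dist (p n) ((hs n, y) : ℝ × E)
          + dist ((hs n, y) : ℝ × E) ((0:ℝ), y) := dist_triangle _ _ _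
      have h1 : dist (p n) ((hs n, y) : ℝ × E) ≤ 2*((hs n)^2)*Kr := by
        have h2 := dist_le_sqrt_RQ (p n) ((hs n, y) : ℝ × E)
        have h3 : Real.sqrt (RQ (p n) ((hs n, y) : ℝ × E)) ≤ 2*((hs n)^2)*Kr := by
          have h4 := Real.sqrt_le_sqrt (hRQ n)
          rwa [Real.sqrt_sq (by positivity)] at h4
        linarith
      have h5 : dist ((hs n, y) : ℝ × E) ((0:ℝ), y) = hs n := by
        rw [Prod.dist_eq]
        simp [Real.dist_eq, abs_of_pos (hhpos n), (hhpos n).le]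
      linarith
    · have h6 : Tendsto (fun n => 2*((hs n)^2)*Kr) atTop (𝓝 0) := by
        have h7 := ((hh0.mul hh0).const_mul 2).mul_const Kr
        have e : (fun n => 2*((hs n)^2)*Kr) = fun n => 2*(hs n * hs n)*Kr := by
          funext n; ring
        rw [e]; simpa using h7
      simpa using h6.add hh0
  -- compactness of the slopes
  set ζ : ℕ → ℝ × E := fun n => ((G (β n) : ℝ), β n) with hζdef
  have hζball : ∀ n, ζ n ∈ Metric.closedBall ((0:ℝ), (0:E)) (2*Kr) := by
    intro n
    have e0 : (((0:ℝ), (0:E)) : ℝ × E) = (0 : ℝ × E) := rfl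
    rw [e0, Metric.mem_closedBall, dist_zero_right]
    rw [Prod.norm_def]
    apply max_le
    · simpa using hGb n
    · simpa using hβb n
  obtain ⟨zbar, hzmem, ψ, hψmono, hζtend⟩ :=
    (isCompact_closedBall ((0:ℝ), (0:E)) (2*Kr)).tendsto_subseq hζball
  have hψtend : Tendsto ψ atTop atTop := hψmono.tendsto_atTop
  have hα : Tendsto (fun k => G (β (ψ k))) atTop (𝓝 zbar.1) :=
    ((continuous_fst.tendsto zbar).comp hζtend)
  have hβt : Tendsto (fun k => β (ψ k)) atTop (𝓝 zbar.2) :=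
    ((continuous_snd.tendsto zbar).comp hζtend)
  have hp_tend : Tendsto (fun k => p (ψ k)) atTop (𝓝 ((0:ℝ), y)) :=
    hptend.comp hψtend
  have hp1_tend : Tendsto (fun k => (p (ψ k)).1) atTop (𝓝 0) := by
    have := (continuous_fst.tendsto ((0:ℝ), y)).comp hp_tend
    exact this
  have hp2_tend : Tendsto (fun k => (p (ψ k)).2) atTop (𝓝 y) := by
    have := (continuous_snd.tendsto ((0:ℝ), y)).comp hp_tend
    exact this
  have hf_tend : Tendsto (fun k => f (p (ψ k))) atTop (𝓝 (f ((0:ℝ), y))) := by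
    have cwa : ContinuousWithinAt f {p : ℝ × E | 0 ≤ p.1} ((0:ℝ), y) := by
      apply (hlip.continuousOn).continuousWithinAt
      simp [mem_setOf]
    have hin : Tendsto (fun k => p (ψ k)) atTop (𝓝[{p : ℝ × E | 0 ≤ p.1}] ((0:ℝ), y)) := by
      rw [tendsto_nhdsWithin_iff]
      exact ⟨hp_tend, Eventually.of_forall (fun k => le_of_lt (hp1 (ψ k)))⟩
    exact cwa.tendsto.comp hin
  -- limit subgradient at (0, y)
  have hsublim : ∀ q : ℝ × E, 0 ≤ q.1 →
      f ((0:ℝ), y) + (zbar.1 * q.1 + ⟪zbar.2, q.2 - y⟫) ≤ f q := by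
    intro q hq
    have hle : ∀ k, f (p (ψ k)) + ((G (β (ψ k)))*(q.1-(p (ψ k)).1)
        + ⟪β (ψ k), q.2-(p (ψ k)).2⟫) ≤ f q := fun k => hsub (ψ k) q hq
    have hT : Tendsto (fun k => f (p (ψ k)) + ((G (β (ψ k)))*(q.1-(p (ψ k)).1)
        + ⟪β (ψ k), q.2-(p (ψ k)).2⟫)) atTop
        (𝓝 (f ((0:ℝ), y) + (zbar.1 * (q.1 - 0) + ⟪zbar.2, q.2 - y⟫))) := by
      apply hf_tend.add
      apply Tendsto.add
      · exact hα.mul (tendsto_const_nhds.sub hp1_tend)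
      · exact hβt.inner (tendsto_const_nhds.sub hp2_tend)
    have := le_of_tendsto hT (Eventually.of_forall hle)
    simpa using this
  -- identification of the x-part of the limit slope
  have hid : zbar.2 = g₀ := by
    have hdir : ∀ v : E, ⟪g₀, v⟫ = ⟪zbar.2, v⟫ := by
      intro v
      set Fv : ℝ → ℝ := fun s => f ((0:ℝ), y + s • v) - s * ⟪zbar.2, v⟫ with hFv
      have hmin : ∀ s : ℝ, Fv 0 ≤ Fv s := by
        intro s
        have := hsublim ((0:ℝ), y + s • v) (le_refl 0)
        simp only [hFv]
        simp only [mul_zero, zero_add] at this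
        have e : ⟪zbar.2, (y + s • v) - y⟫ = s * ⟪zbar.2, v⟫ := by
          rw [add_sub_cancel_left, real_inner_smul_right]
        rw [e] at this
        simp only [zero_mul, sub_zero, zero_smul, add_zero]
        linarith
      have hloc : IsLocalMin Fv 0 := Eventually.of_forall hmin
      have hder : HasDerivAt Fv (⟪g₀, v⟫ - ⟪zbar.2, v⟫) 0 := by
        have hline : HasDerivAt (fun s : ℝ => y + s • v) v 0 := by
          have h1 : HasDerivAt (fun s : ℝ => s • v) ((1:ℝ) • v) 0 := (hasDerivAt_id 0).smul_const v
          simpa using h1.const_add y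
        have hF : HasFDerivAt (fun w => f ((0:ℝ), w)) (InnerProductSpace.toDual ℝ E g₀)
            ((fun s : ℝ => y + s • v) 0) := by
          have := (hasGradientAt_iff_hasFDerivAt).mp hg
          simpa using this
        have hcomp : HasDerivAt (fun s : ℝ => f ((0:ℝ), y + s • v))
            ((InnerProductSpace.toDual ℝ E g₀) v) 0 := by
            have := hF.comp_hasDerivAt 0 hline; exact this
        have hcomp' : HasDerivAt (fun s : ℝ => f ((0:ℝ), y + s • v)) ⟪g₀, v⟫ 0 := by
          simpa [InnerProductSpace.toDual_apply_apply] using hcomp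
        have hlin : HasDerivAt (fun s : ℝ => s * ⟪zbar.2, v⟫) ⟪zbar.2, v⟫ 0 := by
          simpa using (hasDerivAt_id (0:ℝ)).mul_const ⟪zbar.2, v⟫
        exact hcomp'.sub hlin
      have := hloc.hasDerivAt_eq_zero hder
      linarith
    have h0 : ⟪g₀ - zbar.2, g₀ - zbar.2⟫ = 0 := by
      have h1 := hdir (g₀ - zbar.2)
      rw [inner_sub_left]
      linarith
    have := inner_self_eq_zero.mp h0
    rw [sub_eq_zero] at this
    exact this.symm
  have hval : zbar.1 = G g₀ := by
    have h1 : Tendsto (fun k => G (β (ψ k))) atTop (𝓝 (G zbar.2)) :=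
      (hG.continuous.tendsto zbar.2).comp hβt
    have := tendsto_nhds_unique hα h1
    rw [this, hid]
  intro q hq
  have := hsublim q hq
  rw [hval, hid] at this
  exact this

lemma exists_minimizer {f : ℝ × E → ℝ} {K : NNReal}
    (hlip : LipschitzOnWith K f {p : ℝ × E | 0 ≤ p.1})
    (hinit : ContDiff ℝ 1 (fun v => f (0, v)))
    (B x : E) {ε : ℝ} (hε : 0 < ε) :
    ∃ yε : E, HasGradientAt (fun v => f (0, v)) (B - (2*ε) • (yε - x)) yε ∧
      ∀ v : E, f (0, yε) - ⟪B, yε⟫ + ε*‖yε-x‖^2 ≤ f (0, v) - ⟪B, v⟫ + ε*‖v-x‖^2 := by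
  set Kr : ℝ := (K:ℝ) with hKrdef
  have hKr0 : 0 ≤ Kr := K.coe_nonneg
  set f₀ : E → ℝ := fun v => f (0, v) with hf₀
  have hlip₀ : ∀ a b : E, f₀ a - f₀ b ≤ Kr * ‖a - b‖ := by
    intro a b
    have h1 : dist (f ((0:ℝ), a)) (f ((0:ℝ), b)) ≤ Kr * dist ((0:ℝ), a) (((0:ℝ), b) : ℝ × E) :=
      hlip.dist_le_mul _ (by simp [mem_setOf]) _ (by simp [mem_setOf])
    have h2 : dist ((0:ℝ), a) (((0:ℝ), b) : ℝ × E) = ‖a - b‖ := by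
      rw [Prod.dist_eq]
      simp [dist_eq_norm]
    rw [h2] at h1
    have h3 : f₀ a - f₀ b ≤ dist (f ((0:ℝ), a)) (f ((0:ℝ), b)) := by
      rw [Real.dist_eq]; exact le_abs_self _
    linarith
  set hE : E → ℝ := fun v => f₀ v - ⟪B, v⟫ + ε*‖v-x‖^2 with hhE
  have hEcont : Continuous hE := by
    apply Continuous.add
    · exact hinit.continuous.sub (innerSL ℝ B).continuous
    · exact continuous_const.mul ((continuous_id.sub continuous_const).norm.pow 2)
  set R : ℝ := (Kr + ‖B‖)/ε + 1 with hRdef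
  have hR0 : 0 < R := by positivity
  obtain ⟨yε, hyball, hymin⟩ := (isCompact_closedBall x R).exists_isMinOn
    ⟨x, Metric.mem_closedBall_self hR0.le⟩ hEcont.continuousOn
  have hglobmin : ∀ v : E, hE yε ≤ hE v := by
    intro v
    by_cases hv : v ∈ Metric.closedBall x R
    · exact hymin hv
    · have hd : R < ‖v - x‖ := by
        simp only [Metric.mem_closedBall, not_le, dist_eq_norm] at hv
        exact hv
      have hEx : hE yε ≤ hE x := hymin (Metric.mem_closedBall_self hR0.le)
      have h1 : f₀ x - f₀ v ≤ Kr * ‖x - v‖ := hlip₀ x v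
      have h1' : ‖x - v‖ = ‖v - x‖ := norm_sub_rev x v
      have h2 : ⟪B, v⟫ - ⟪B, x⟫ ≤ ‖B‖ * ‖v - x‖ := by
        have h3 : ⟪B, v - x⟫ ≤ ‖B‖ * ‖v - x‖ :=
          le_trans (real_inner_le_norm B (v-x)) (by rfl)
        rw [inner_sub_right] at h3
        linarith
      have hEv : hE x ≤ hE v := by
        have hr0 : (0:ℝ) < ‖v - x‖ := lt_trans hR0 hd
        have hεR : ε * R = Kr + ‖B‖ + ε := by
          rw [hRdef]; field_simp
        have h5 : ε * R < ε * ‖v - x‖ := (mul_lt_mul_iff_right₀ hε).mpr hd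
        have h6 : Kr + ‖B‖ < ε * ‖v - x‖ := by linarith
        have h7 := mul_lt_mul_of_pos_right h6 hr0
        have key : Kr * ‖v - x‖ + ‖B‖ * ‖v - x‖ < ε * ‖v - x‖^2 := by nlinarith [h7]
        rw [h1'] at h1
        simp only [hhE]
        have hxx : ‖x - x‖ = (0:ℝ) := by simp
        rw [hxx]
        have h02 : ε * (0:ℝ)^2 = 0 := by ring
        rw [h02]
        linarith
      linarith
  -- first order condition
  have hdiff₀ : Differentiable ℝ f₀ := hinit.differentiable one_ne_zero
  have hD : HasFDerivAt f₀ (fderiv ℝ f₀ yε) yε := (hdiff₀ yε).hasFDerivAt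
  have hB' : HasFDerivAt (fun v : E => ⟪B, v⟫) (innerSL ℝ B) yε := (innerSL ℝ B).hasFDerivAt
  have hq : HasFDerivAt (fun v : E => ‖v - x‖^2) ((2:ℝ) • (innerSL ℝ (yε - x))) yε := by
    have h0 : HasFDerivAt (fun v : E => v - x) (ContinuousLinearMap.id ℝ E) yε :=
      (hasFDerivAt_id yε).sub_const x
    have h1 := h0.norm_sq
    convert h1 using 1
    ext w
    simp [inner_sub_left, two_smul]
  have hqε : HasFDerivAt (fun v : E => ε * ‖v - x‖^2)
      (ε • ((2:ℝ) • (innerSL ℝ (yε - x)))) yε :=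
    hq.const_mul ε
  have hEderiv : HasFDerivAt hE (fderiv ℝ f₀ yε - innerSL ℝ B
      + ε • ((2:ℝ) • (innerSL ℝ (yε - x)))) yε :=
    (hD.sub hB').add hqε
  have hloc : IsLocalMin hE yε := Eventually.of_forall hglobmin
  have hzero := hloc.hasFDerivAt_eq_zero hEderiv
  have hDeq : fderiv ℝ f₀ yε = InnerProductSpace.toDual ℝ E (B - (2*ε) • (yε - x)) := by
    ext v
    have h1 := ContinuousLinearMap.ext_iff.mp hzero v
    simp only [ContinuousLinearMap.add_apply, ContinuousLinearMap.sub_apply,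
      ContinuousLinearMap.smul_apply, ContinuousLinearMap.coe_comp', Function.comp_apply,
      ContinuousLinearMap.coe_id', id_eq, innerSL_apply_apply, ContinuousLinearMap.zero_apply,
      smul_eq_mul] at h1
    rw [InnerProductSpace.toDual_apply_apply, inner_sub_left, real_inner_smul_left]
    linarith
  have hgrad : HasGradientAt f₀ (B - (2*ε) • (yε - x)) yε := by
    rw [hasGradientAt_iff_hasFDerivAt]
    rw [← hDeq]
    exact hD
  exact ⟨yε, hgrad, fun v => hglobmin v⟩

lemma contDiff_RQ (p : ℝ × E) : ContDiff ℝ (⊤ : ℕ∞) (fun q : ℝ × E => RQ q p) := by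
  unfold RQ
  apply ContDiff.add
  · exact (contDiff_fst.sub contDiff_const).pow 2
  · exact ContDiff.norm_sq (𝕜 := ℝ) (contDiff_snd.sub contDiff_const)

end Stmt0Main

open Stmt0Main in
/-- The convex selection principle: if `f` is jointly convex and Lipschitz on
`[0,∞) × ℝ^d`, `f(0,·)` is continuously differentiable, and the equation
`∂_t φ - G(∇_x φ) = 0` holds at every point `(t,x) ∈ (0,∞) × ℝ^d` where a smooth `φ` touches
`f` from above in the sense that `f - φ` has a strict local maximum, then `f` is a viscosity
solution (both sub- and supersolution) of `∂_t f - G(∇_x f) = 0` on `(0,∞) × ℝ^d`. -/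
theorem stmt0 {d : ℕ}
    (G : EuclideanSpace ℝ (Fin d) → ℝ) (hG : LocallyLipschitz G)
    (f : ℝ × EuclideanSpace ℝ (Fin d) → ℝ) (K : NNReal)
    (hconv : ConvexOn ℝ {p : ℝ × EuclideanSpace ℝ (Fin d) | 0 ≤ p.1} f)
    (hlip : LipschitzOnWith K f {p : ℝ × EuclideanSpace ℝ (Fin d) | 0 ≤ p.1})
    (hinit : ContDiff ℝ 1 (fun x => f (0, x)))
    (hcrit : ∀ (t : ℝ) (x : EuclideanSpace ℝ (Fin d)), 0 < t →
      ∀ φ : ℝ × EuclideanSpace ℝ (Fin d) → ℝ,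
        ContDiffOn ℝ (⊤ : ℕ∞) φ {p : ℝ × EuclideanSpace ℝ (Fin d) | 0 < p.1} →
        (∃ U ∈ 𝓝 ((t, x) : ℝ × EuclideanSpace ℝ (Fin d)),
          ∀ q ∈ U, q ≠ (t, x) → f q - φ q < f (t, x) - φ (t, x)) →
        deriv (fun s => φ (s, x)) t - G (gradient (fun y => φ (t, y)) x) = 0) :
    (∀ (t : ℝ) (x : EuclideanSpace ℝ (Fin d)), 0 < t →
      ∀ φ : ℝ × EuclideanSpace ℝ (Fin d) → ℝ,
        ContDiffOn ℝ (⊤ : ℕ∞) φ {p : ℝ × EuclideanSpace ℝ (Fin d) | 0 < p.1} →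
        IsLocalMax (fun p => f p - φ p) (t, x) →
        deriv (fun s => φ (s, x)) t - G (gradient (fun y => φ (t, y)) x) ≤ 0) ∧
    (∀ (t : ℝ) (x : EuclideanSpace ℝ (Fin d)), 0 < t →
      ∀ φ : ℝ × EuclideanSpace ℝ (Fin d) → ℝ,
        ContDiffOn ℝ (⊤ : ℕ∞) φ {p : ℝ × EuclideanSpace ℝ (Fin d) | 0 < p.1} →
        IsLocalMin (fun p => f p - φ p) (t, x) →
        0 ≤ deriv (fun s => φ (s, x)) t - G (gradient (fun y => φ (t, y)) x)) := by
  have hopen : IsOpen {p : ℝ × EuclideanSpace ℝ (Fin d) | 0 < p.1} := isOpen_lt continuous_const continuous_fst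
  constructor
  · -- SUBSOLUTION
    intro t x ht φ hφ hmax
    have hz : ((t, x) : ℝ × EuclideanSpace ℝ (Fin d)) ∈ {p : ℝ × EuclideanSpace ℝ (Fin d) | 0 < p.1} := ht
    have hct : ContDiffAt ℝ (⊤ : ℕ∞) φ ((t, x) : ℝ × EuclideanSpace ℝ (Fin d)) := hφ.contDiffAt (hopen.mem_nhds hz)
    have hdab : DifferentiableAt ℝ φ ((t, x) : ℝ × EuclideanSpace ℝ (Fin d)) := hct.differentiableAt (by simp)
    set L := fderiv ℝ φ ((t, x) : ℝ × EuclideanSpace ℝ (Fin d)) with hLdef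
    have hL : HasFDerivAt φ L ((t, x) : ℝ × EuclideanSpace ℝ (Fin d)) := hdab.hasFDerivAt
    have hA : HasDerivAt (fun s => φ (s, x)) (L (1, 0)) t := partial_deriv hL
    set Bg : EuclideanSpace ℝ (Fin d) := (InnerProductSpace.toDual ℝ (EuclideanSpace ℝ (Fin d))).symm
      (L.comp (ContinuousLinearMap.inr ℝ ℝ (EuclideanSpace ℝ (Fin d)))) with hBgdef
    have hBg : HasGradientAt (fun y => φ (t, y)) Bg x := partial_grad hL
    rw [hA.deriv, hBg.gradient]
    -- the perturbed test function
    set ψ : ℝ × EuclideanSpace ℝ (Fin d) → ℝ := fun q => φ q + RQ q ((t, x) : ℝ × EuclideanSpace ℝ (Fin d)) with hψdef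
    have hψs : ContDiffOn ℝ (⊤ : ℕ∞) ψ {p : ℝ × EuclideanSpace ℝ (Fin d) | 0 < p.1} :=
      hφ.add (contDiff_RQ ((t, x) : ℝ × EuclideanSpace ℝ (Fin d))).contDiffOn
    obtain ⟨U, hU, hUp⟩ := Filter.eventually_iff_exists_mem.mp hmax
    have hstrict : ∀ q ∈ U, q ≠ ((t, x) : ℝ × EuclideanSpace ℝ (Fin d)) →
        f q - ψ q < f (t, x) - ψ (t, x) := by
      intro q hqU hqne
      have h1 : f q - φ q ≤ f (t, x) - φ (t, x) := hUp q hqU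
      have h2 : 0 < RQ q ((t, x) : ℝ × EuclideanSpace ℝ (Fin d)) := RQ_pos hqne
      have e1 : ψ q = φ q + RQ q ((t, x) : ℝ × EuclideanSpace ℝ (Fin d)) := rfl
      have e2 : ψ (t, x) = φ (t, x) + RQ ((t, x) : ℝ × EuclideanSpace ℝ (Fin d)) ((t, x) : ℝ × EuclideanSpace ℝ (Fin d)) := rfl
      rw [e1, e2, RQ_self]
      linarith
    have happ := hcrit t x ht ψ hψs ⟨U, hU, hstrict⟩
    -- compute the derivatives of ψ
    have hq1 : HasDerivAt (fun s : ℝ => RQ ((s, x) : ℝ × EuclideanSpace ℝ (Fin d)) ((t, x) : ℝ × EuclideanSpace ℝ (Fin d))) 0 t := by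
      have e : (fun s : ℝ => RQ ((s, x) : ℝ × EuclideanSpace ℝ (Fin d)) ((t, x) : ℝ × EuclideanSpace ℝ (Fin d)))
          = fun s : ℝ => (s - t)^2 + ‖x - x‖^2 := rfl
      rw [e]
      have h1 : HasDerivAt (fun s : ℝ => (s - t)^2) (2 * (t - t)) t := by
        have := ((hasDerivAt_id t).sub_const t).fun_pow 2
        simpa [mul_comm] using this
      have h2 := h1.add_const (‖x - x‖^2)
      simpa using h2
    have hAψ : HasDerivAt (fun s => ψ (s, x)) (L (1, 0) + 0) t := hA.add hq1
    have hq2 : HasFDerivAt (fun y : EuclideanSpace ℝ (Fin d) => RQ ((t, y) : ℝ × EuclideanSpace ℝ (Fin d)) ((t, x) : ℝ × EuclideanSpace ℝ (Fin d)))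
        (0 : EuclideanSpace ℝ (Fin d) →L[ℝ] ℝ) x := by
      have e : (fun y : EuclideanSpace ℝ (Fin d) => RQ ((t, y) : ℝ × EuclideanSpace ℝ (Fin d)) ((t, x) : ℝ × EuclideanSpace ℝ (Fin d)))
          = fun y : EuclideanSpace ℝ (Fin d) => (t - t)^2 + ‖y - x‖^2 := rfl
      rw [e]
      have h0 : HasFDerivAt (fun y : EuclideanSpace ℝ (Fin d) => y - x) (ContinuousLinearMap.id ℝ (EuclideanSpace ℝ (Fin d))) x :=
        (hasFDerivAt_id x).sub_const x
      have h1 := h0.norm_sq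
      have h2 : HasFDerivAt (fun y : EuclideanSpace ℝ (Fin d) => ‖y - x‖^2) (0 : EuclideanSpace ℝ (Fin d) →L[ℝ] ℝ) x := by
        refine h1.congr_fderiv ?_
        ext w
        simp
      exact h2.const_add ((t - t)^2)
    have hBψ : HasGradientAt (fun y => ψ (t, y)) Bg x := by
      rw [hasGradientAt_iff_hasFDerivAt]
      have := (hasGradientAt_iff_hasFDerivAt.mp hBg).fun_add hq2
      simpa using this
    rw [show (fun s => ψ (s, x)) = fun s => φ (s, x) + RQ ((s, x) : ℝ × EuclideanSpace ℝ (Fin d)) ((t, x) : ℝ × EuclideanSpace ℝ (Fin d))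
      from rfl] at happ
    rw [hAψ.deriv] at happ
    rw [show (fun y => ψ (t, y)) = fun y => φ (t, y) + RQ ((t, y) : ℝ × EuclideanSpace ℝ (Fin d)) ((t, x) : ℝ × EuclideanSpace ℝ (Fin d))
      from rfl] at happ
    rw [hBψ.gradient] at happ
    linarith
  · -- SUPERSOLUTION
    intro t x ht φ hφ hmin
    have hz : ((t, x) : ℝ × EuclideanSpace ℝ (Fin d)) ∈ {p : ℝ × EuclideanSpace ℝ (Fin d) | 0 < p.1} := ht
    have hct : ContDiffAt ℝ (⊤ : ℕ∞) φ ((t, x) : ℝ × EuclideanSpace ℝ (Fin d)) := hφ.contDiffAt (hopen.mem_nhds hz)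
    have hdab : DifferentiableAt ℝ φ ((t, x) : ℝ × EuclideanSpace ℝ (Fin d)) := hct.differentiableAt (by simp)
    set L := fderiv ℝ φ ((t, x) : ℝ × EuclideanSpace ℝ (Fin d)) with hLdef
    have hL : HasFDerivAt φ L ((t, x) : ℝ × EuclideanSpace ℝ (Fin d)) := hdab.hasFDerivAt
    set A : ℝ := L (1, 0) with hAdef
    have hA : HasDerivAt (fun s => φ (s, x)) A t := partial_deriv hL
    set Bg : EuclideanSpace ℝ (Fin d) := (InnerProductSpace.toDual ℝ (EuclideanSpace ℝ (Fin d))).symm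
      (L.comp (ContinuousLinearMap.inr ℝ ℝ (EuclideanSpace ℝ (Fin d)))) with hBgdef
    have hBg : HasGradientAt (fun y => φ (t, y)) Bg x := partial_grad hL
    rw [hA.deriv, hBg.gradient]
    -- global subgradient at (t, x)
    have hsubz := sub_of_localmin hconv (show 0 < ((t, x) : ℝ × EuclideanSpace ℝ (Fin d)).1 from ht) hL hmin
    have hrepr : ∀ q : ℝ × EuclideanSpace ℝ (Fin d), L (q - ((t, x) : ℝ × EuclideanSpace ℝ (Fin d))) = (q.1 - t) * A + ⟪Bg, q.2 - x⟫ := by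
      intro q
      have e : q - ((t, x) : ℝ × EuclideanSpace ℝ (Fin d)) = ((q.1 - t, q.2 - x) : ℝ × EuclideanSpace ℝ (Fin d)) := rfl
      rw [e, hAdef, hBgdef]
      exact toDual_symm_pair (q.1 - t) (q.2 - x)
    have hm₀ : ∀ v : EuclideanSpace ℝ (Fin d), f (t, x) - t*A - ⟪Bg, x⟫ ≤ f ((0:ℝ), v) - ⟪Bg, v⟫ := by
      intro v
      have h1 := hsubz ((0:ℝ), v) (le_refl 0)
      rw [hrepr ((0:ℝ), v)] at h1
      have e2 : ⟪Bg, (((0:ℝ), v) : ℝ × EuclideanSpace ℝ (Fin d)).2 - x⟫ = ⟪Bg, v⟫ - ⟪Bg, x⟫ := by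
        rw [show (((0:ℝ), v) : ℝ × EuclideanSpace ℝ (Fin d)).2 = v from rfl, inner_sub_right]
      rw [e2] at h1
      have e3 : ((((0:ℝ), v) : ℝ × EuclideanSpace ℝ (Fin d)).1 - t) = -t := by norm_num
      rw [e3] at h1
      linarith
    set C₀ : ℝ := f ((0:ℝ), x) - f (t, x) + t*A with hC₀def
    have hC₀ : 0 ≤ C₀ := by
      have := hm₀ x
      rw [hC₀def]
      linarith
    -- key approximation
    have key : ∀ ε : ℝ, 0 < ε → ∃ b' : EuclideanSpace ℝ (Fin d), t * G b' ≤ t * A ∧ ‖b' - Bg‖^2 ≤ 4*ε*C₀ := by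
      intro ε hε
      obtain ⟨yε, hgrad, hminε⟩ := exists_minimizer hlip hinit Bg x hε
      set bε : EuclideanSpace ℝ (Fin d) := Bg - (2*ε) • (yε - x) with hbεdef
      refine ⟨bε, ?_, ?_⟩
      · have h1 := hsubz ((0:ℝ), yε) (le_refl 0)
        rw [hrepr ((0:ℝ), yε)] at h1
        have e2 : ⟪Bg, (((0:ℝ), yε) : ℝ × EuclideanSpace ℝ (Fin d)).2 - x⟫ = ⟪Bg, yε - x⟫ := rfl
        have e3 : ((((0:ℝ), yε) : ℝ × EuclideanSpace ℝ (Fin d)).1 - t) = -t := by norm_num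
        rw [e2, e3] at h1
        have h2 := boundary_subgrad hG hconv hlip hcrit hgrad ((t, x) : ℝ × EuclideanSpace ℝ (Fin d)) (le_of_lt ht)
        have e4 : ((t, x) : ℝ × EuclideanSpace ℝ (Fin d)).1 = t := rfl
        have e5 : ((t, x) : ℝ × EuclideanSpace ℝ (Fin d)).2 = x := rfl
        rw [e4, e5] at h2
        -- h2 : f (0, yε) + (G bε * t + ⟪bε, x - yε⟫) ≤ f (t, x)
        have hinner : ⟪bε, x - yε⟫ = -⟪Bg, yε - x⟫ + (2*ε) * ‖yε - x‖^2 := by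
          rw [hbεdef, inner_sub_left, real_inner_smul_left]
          have hflip : (x - yε) = -(yε - x) := by abel
          rw [hflip, inner_neg_right, inner_neg_right, real_inner_self_eq_norm_sq]
          ring
        rw [hinner] at h2
        have hpos : 0 ≤ (2*ε) * ‖yε - x‖^2 := by positivity
        nlinarith [h1, h2]
      · have hmx := hminε x
        have hm := hm₀ yε
        have hxx : ‖x - x‖ = (0:ℝ) := by simp
        rw [hxx] at hmx
        have hb2 : ε*‖yε-x‖^2 ≤ C₀ := by
          rw [hC₀def]
          nlinarith [hmx, hm]
        have he : bε - Bg = -((2*ε) • (yε - x)) := by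
          rw [hbεdef]; abel
        rw [he, norm_neg, norm_smul, Real.norm_eq_abs, abs_of_pos (by positivity : (0:ℝ) < 2*ε)]
        nlinarith [hb2, hε.le, sq_nonneg ‖yε - x‖]
    -- take limits
    have key' : ∀ n : ℕ, ∃ b' : EuclideanSpace ℝ (Fin d), t * G b' ≤ t * A ∧ ‖b' - Bg‖^2 ≤ 4*(1/((n:ℝ)+1))*C₀ :=
      fun n => key (1/((n:ℝ)+1)) (by positivity)
    choose bs hb1 hb2 using key'
    have htendb : Tendsto bs atTop (𝓝 Bg) := by
      rw [tendsto_iff_dist_tendsto_zero]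
      apply squeeze_zero (f := fun n : ℕ => dist (bs n) Bg)
        (g := fun n : ℕ => Real.sqrt (4*(1/((n:ℝ)+1))*C₀)) (fun n => dist_nonneg)
      · intro n
        rw [dist_eq_norm]
        rw [Real.le_sqrt (norm_nonneg _) (by positivity)]
        exact hb2 n
      · have h1 : Tendsto (fun n : ℕ => 4*(1/((n:ℝ)+1))*C₀) atTop (𝓝 0) := by
          have h2 := (tendsto_one_div_add_atTop_nhds_zero_nat (𝕜 := ℝ)).const_mul 4
          have h3 := h2.mul_const C₀
          simpa using h3
        have h4 := (Real.continuous_sqrt.tendsto 0).comp h1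
        simpa [Function.comp_def] using h4
    have hg1 : Tendsto (fun n => G (bs n)) atTop (𝓝 (G Bg)) := by
      have := (hG.continuous.tendsto Bg).comp htendb
      simpa [Function.comp_def] using this
    have hGt : Tendsto (fun n => t * G (bs n)) atTop (𝓝 (t * G Bg)) :=
      tendsto_const_nhds.mul hg1
    have hfin : t * G Bg ≤ t * A := le_of_tendsto hGt (Eventually.of_forall hb1)
    have : G Bg ≤ A := le_of_mul_le_mul_left hfin ht
    linarith
end

section
/- Let d ∈ ℕ, let f : ℝ^d → ℝ be convex, and let C ≥ 0. Assume that for every x ∈ ℝ^d and every ε > 0 there exists a twice continuously differentiable function g : ℝ^d → ℝ such that g(y) ≥ f(y) for all y ∈ ℝ^d, g(x) ≤ f(x) + ε, and the second derivatives of g are uniformly bounded in the sense that |y · (Hess g(z)) y| ≤ C|y|² for all z, y ∈ ℝ^d. Then f is differentiable at every point of ℝ^d, and consequently f is continuously differentiable. -/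
/-!
Taylor's formula for an upper bound `g` touching `f` up to `ε` at `x` gives
`f (x + y) - f x - g' x y ≤ ε + C/2 ‖y‖²`, and midpoint convexity of `f` turns this one-sided
bound into a two-sided one. Two such `ε`-approximate linear maps are close in operator norm (test
them on a small sphere), so as `ε → 0` they converge to some `p` with
`|f (x + y) - f x - p y| ≤ C/2 ‖y‖²`. This `p` is the derivative at `x`, and comparing the
expansions at `x` and `x'` shows that the derivative is `3C`-Lipschitz.
-/

open Set Filter Topology Asymptotics

theorem le_add_deriv_add_half_of_deriv_deriv_le {φ φ' φ'' : ℝ → ℝ} {K : ℝ}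
    (hφ : ∀ t, HasDerivAt φ (φ' t) t) (hφ' : ∀ t, HasDerivAt φ' (φ'' t) t)
    (hK : ∀ t, φ'' t ≤ K) : φ 1 ≤ φ 0 + φ' 0 + K / 2 := by
  have hv : Antitone fun t => φ' t - K * t :=
    antitone_of_hasDerivAt_nonpos (fun t => (hφ' t).sub ((hasDerivAt_id t).const_mul K))
      fun t => by simpa using hK t
  have hu : AntitoneOn (fun t => φ t - t * φ' 0 - K / 2 * t ^ 2) (Ici 0) := by
    have hd : ∀ t, HasDerivAt (fun t => φ t - t * φ' 0 - K / 2 * t ^ 2)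
        (φ' t - φ' 0 - K * t) t := fun t => by
      refine (((hφ t).sub ((hasDerivAt_id' t).mul_const (φ' 0))).sub
        ((hasDerivAt_pow 2 t).const_mul (K / 2))).congr_deriv ?_
      push_cast
      ring
    refine antitoneOn_of_hasDerivWithinAt_nonpos (convex_Ici 0)
      (fun t _ => (hd t).continuousAt.continuousWithinAt) (fun t _ => (hd t).hasDerivWithinAt)
      fun t ht => ?_
    rw [interior_Ici] at ht
    have := hv (le_of_lt ht)
    simp only [mul_zero, sub_zero] at this
    linarith
  have := hu (mem_Ici.2 le_rfl) (mem_Ici.2 zero_le_one) zero_le_one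
  simp only at this
  linarith

variable {E F : Type*} [NormedAddCommGroup E] [NormedSpace ℝ E]
  [NormedAddCommGroup F] [NormedSpace ℝ F]

theorem ContDiff.le_add_fderiv_add_half_mul_sq {g : E → ℝ} (hg : ContDiff ℝ 2 g) {C : ℝ}
    (hH : ∀ z y, fderiv ℝ (fderiv ℝ g) z y y ≤ C * ‖y‖ ^ 2) (x y : E) :
    g (x + y) ≤ g x + fderiv ℝ g x y + C / 2 * ‖y‖ ^ 2 := by
  have hg1 : Differentiable ℝ g := hg.differentiable (by norm_num)
  have hg2 : Differentiable ℝ (fderiv ℝ g) :=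
    (hg.fderiv_right (m := 1) le_rfl).differentiable one_ne_zero
  have hline : ∀ t : ℝ, HasDerivAt (fun t : ℝ => x + t • y) y t := fun t => by
    simpa using ((hasDerivAt_id t).smul_const y).const_add x
  have := le_add_deriv_add_half_of_deriv_deriv_le
    (fun t => (hg1 _).hasFDerivAt.comp_hasDerivAt t (hline t))
    (fun t => by simpa using
      ((hg2 _).hasFDerivAt.comp_hasDerivAt t (hline t)).clm_apply (hasDerivAt_const t y))
    (fun t => hH (x + t • y) y)
  simp only [Function.comp_apply, zero_smul, add_zero, one_smul] at this
  linarith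

theorem ConvexOn.abs_sub_sub_le_of_sub_sub_le {f : E → ℝ} (hf : ConvexOn ℝ univ f) {x : E}
    {p : E →L[ℝ] ℝ} {a c : ℝ} (h : ∀ y, f (x + y) - f x - p y ≤ a + c * ‖y‖ ^ 2) (y : E) :
    |f (x + y) - f x - p y| ≤ a + c * ‖y‖ ^ 2 := by
  have hmid : f x ≤ (f (x + y) + f (x - y)) / 2 := by
    have := hf.2 (mem_univ (x + y)) (mem_univ (x - y)) (by norm_num : (0:ℝ) ≤ 1/2)
      (by norm_num : (0:ℝ) ≤ 1/2) (by norm_num)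
    rw [show (1/2 : ℝ) • (x + y) + (1/2 : ℝ) • (x - y) = x by module] at this
    simp only [smul_eq_mul] at this
    linarith
  have hneg := h (-y)
  rw [map_neg, norm_neg, ← sub_eq_add_neg] at hneg
  rw [abs_le]
  constructor <;> linarith [h y]

theorem ContinuousLinearMap.opNorm_le_div_of_norm_eq {T : E →L[ℝ] F} {r M : ℝ} (hr : 0 < r)
    (hM : 0 ≤ M) (h : ∀ z, ‖z‖ = r → ‖T z‖ ≤ M) : ‖T‖ ≤ M / r := by
  refine T.opNorm_le_of_unit_norm (by positivity) fun z hz => ?_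
  have := h (r • z) (by simp [norm_smul, hz, hr.le])
  rw [map_smul, norm_smul, Real.norm_of_nonneg hr.le] at this
  rwa [le_div_iff₀ hr, mul_comm]

theorem ContinuousLinearMap.norm_sub_le_of_norm_sub_apply_le {r : E → F}
    {p q : E →L[ℝ] F} {a b c t : ℝ} (ha : 0 ≤ a) (hb : 0 ≤ b) (hc : 0 ≤ c) (ht : 0 < t)
    (hp : ∀ y, ‖r y - p y‖ ≤ a + c * ‖y‖ ^ 2) (hq : ∀ y, ‖r y - q y‖ ≤ b + c * ‖y‖ ^ 2) :
    ‖p - q‖ ≤ (a + b + 2 * c * t ^ 2) / t := by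
  refine opNorm_le_div_of_norm_eq ht (by positivity) fun y hy => ?_
  calc ‖(p - q) y‖ = ‖(r y - q y) - (r y - p y)‖ := by simp
    _ ≤ ‖r y - q y‖ + ‖r y - p y‖ := norm_sub_le _ _
    _ ≤ a + b + 2 * c * t ^ 2 := by rw [← hy]; linarith [hp y, hq y]

theorem exists_norm_sub_le_mul_sq_of_forall_pos [CompleteSpace F] {r : E → F} {c : ℝ}
    (hc : 0 ≤ c)
    (h : ∀ ε > 0, ∃ p : E →L[ℝ] F, ∀ y, ‖r y - p y‖ ≤ ε + c * ‖y‖ ^ 2) :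
    ∃ p : E →L[ℝ] F, ∀ y, ‖r y - p y‖ ≤ c * ‖y‖ ^ 2 := by
  -- With `ε = δ²`, testing on the sphere of radius `δ` makes both error terms `O(δ)`.
  choose q hq using fun n : ℕ => h ((1 / (n + 1)) ^ 2) (by positivity)
  have hcauchy : CauchySeq q := by
    refine cauchySeq_of_le_tendsto_0 (fun N : ℕ => (2 + 2 * c) * (1 / (N + 1)))
      (fun n m N hn hm => ?_) ?_
    · have hδ : ∀ k : ℕ, N ≤ k → 1 / ((k : ℝ) + 1) ≤ 1 / (N + 1) := fun k hk =>
        one_div_le_one_div_of_le (by positivity) (by exact_mod_cast Nat.succ_le_succ hk)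
      set δ : ℝ := 1 / (N + 1)
      have hδpos : 0 < δ := by positivity
      rw [dist_eq_norm]
      calc ‖q n - q m‖ ≤ ((1 / (n + 1)) ^ 2 + (1 / (m + 1)) ^ 2 + 2 * c * δ ^ 2) / δ :=
            ContinuousLinearMap.norm_sub_le_of_norm_sub_apply_le (by positivity)
              (by positivity) hc hδpos (hq n) (hq m)
        _ ≤ (δ ^ 2 + δ ^ 2 + 2 * c * δ ^ 2) / δ := by
            gcongr
            exacts [hδ n hn, hδ m hm]
        _ = (2 + 2 * c) * δ := by field_simp; ring
    · simpa using tendsto_one_div_add_atTop_nhds_zero_nat.const_mul (2 + 2 * c)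
  obtain ⟨p, hp⟩ := cauchySeq_tendsto_of_complete hcauchy
  refine ⟨p, fun y => ?_⟩
  have hlhs : Tendsto (fun n => ‖r y - q n y‖) atTop (𝓝 ‖r y - p y‖) :=
    (tendsto_const_nhds.sub
      (((ContinuousLinearMap.apply ℝ F y).continuous.tendsto p).comp hp)).norm
  have hrhs : Tendsto (fun n : ℕ => (1 / ((n : ℝ) + 1)) ^ 2 + c * ‖y‖ ^ 2) atTop
      (𝓝 (c * ‖y‖ ^ 2)) := by
    simpa using (tendsto_one_div_add_atTop_nhds_zero_nat.pow 2).add_const (c * ‖y‖ ^ 2)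
  exact le_of_tendsto_of_tendsto' hlhs hrhs fun n => hq n y

theorem hasFDerivAt_of_norm_sub_sub_le_mul_sq {f : E → F} {f' : E →L[ℝ] F} {x : E} {c : ℝ}
    (h : ∀ y, ‖f (x + y) - f x - f' y‖ ≤ c * ‖y‖ ^ 2) : HasFDerivAt f f' x := by
  rw [hasFDerivAt_iff_isLittleO_nhds_zero]
  refine (IsBigO.of_bound c (Eventually.of_forall fun y => ?_)).trans_isLittleO
    (isLittleO_norm_pow_id one_lt_two)
  simpa using h y

theorem lipschitzWith_of_norm_sub_sub_le_mul_sq {f : E → F} {f' : E → E →L[ℝ] F} {c : ℝ}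
    (hc : 0 ≤ c) (h : ∀ x y, ‖f (x + y) - f x - f' x y‖ ≤ c * ‖y‖ ^ 2) :
    LipschitzWith (Real.toNNReal (6 * c)) f' := by
  refine LipschitzWith.of_dist_le' fun x' x => ?_
  rw [dist_eq_norm, dist_eq_norm]
  rcases eq_or_ne x' x with rfl | hne
  · simp
  have hr : 0 < ‖x' - x‖ := norm_pos_iff.2 (sub_ne_zero.2 hne)
  set R : E → E → F := fun x y => f (x + y) - f x - f' x y with hR
  have hsphere : ∀ z, ‖z‖ = ‖x' - x‖ → ‖(f' x' - f' x) z‖ ≤ 6 * c * ‖x' - x‖ ^ 2 := by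
    intro z hz
    have hsplit : (f' x' - f' x) z = R x (x' - x + z) - R x' z - R x (x' - x) := by
      simp only [hR, sub_apply, map_add,
        show x + (x' - x + z) = x' + z by abel, add_sub_cancel]
      abel
    have hlong : ‖x' - x + z‖ ≤ 2 * ‖x' - x‖ := by linarith [norm_add_le (x' - x) z]
    calc ‖(f' x' - f' x) z‖ ≤ ‖R x (x' - x + z)‖ + ‖R x' z‖ + ‖R x (x' - x)‖ := by
          rw [hsplit]
          exact (norm_sub_le _ _).trans (add_le_add_left (norm_sub_le _ _) _)
      _ ≤ c * (2 * ‖x' - x‖) ^ 2 + c * ‖z‖ ^ 2 + c * ‖x' - x‖ ^ 2 := by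
          gcongr
          exacts [(h _ _).trans (by gcongr), h _ _, h _ _]
      _ = 6 * c * ‖x' - x‖ ^ 2 := by rw [hz]; ring
  calc ‖f' x' - f' x‖ ≤ 6 * c * ‖x' - x‖ ^ 2 / ‖x' - x‖ :=
        ContinuousLinearMap.opNorm_le_div_of_norm_eq hr (by positivity) hsphere
    _ = 6 * c * ‖x' - x‖ := by field_simp

/-- A convex function `f : ℝ^d → ℝ` which at every point admits
`ε`-close-from-above `C²` upper bounds with uniformly bounded Hessians is differentiable
everywhere, hence continuously differentiable. -/
theorem stmt6 {d : ℕ} (f : EuclideanSpace ℝ (Fin d) → ℝ)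
    (hf : ConvexOn ℝ Set.univ f) (C : ℝ) (hC : 0 ≤ C)
    (happrox : ∀ x : EuclideanSpace ℝ (Fin d), ∀ ε : ℝ, 0 < ε →
      ∃ g : EuclideanSpace ℝ (Fin d) → ℝ, ContDiff ℝ 2 g ∧
        (∀ y, f y ≤ g y) ∧ g x ≤ f x + ε ∧
        (∀ z y : EuclideanSpace ℝ (Fin d), |fderiv ℝ (fderiv ℝ g) z y y| ≤ C * ‖y‖ ^ 2)) :
    (∀ x, DifferentiableAt ℝ f x) ∧ ContDiff ℝ 1 f := by
  have hexpand : ∀ x, ∃ p : EuclideanSpace ℝ (Fin d) →L[ℝ] ℝ,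
      ∀ y, ‖f (x + y) - f x - p y‖ ≤ C / 2 * ‖y‖ ^ 2 := fun x =>
    exists_norm_sub_le_mul_sq_of_forall_pos (r := fun y => f (x + y) - f x) (by positivity)
      fun ε hε => by
        obtain ⟨g, hg, hfg, hgx, hH⟩ := happrox x ε hε
        refine ⟨fderiv ℝ g x, fun y => (Real.norm_eq_abs _).trans_le
          (hf.abs_sub_sub_le_of_sub_sub_le (fun y => ?_) y)⟩
        have := hg.le_add_fderiv_add_half_mul_sq (fun z y => (le_abs_self _).trans (hH z y)) x y
        linarith [hfg (x + y)]
  choose f' hf' using hexpand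
  have hderiv : ∀ x, HasFDerivAt f (f' x) x := fun x =>
    hasFDerivAt_of_norm_sub_sub_le_mul_sq (hf' x)
  have hdiff : Differentiable ℝ f := fun x => (hderiv x).differentiableAt
  refine ⟨hdiff, contDiff_one_iff_fderiv.2 ⟨hdiff, ?_⟩⟩
  rw [funext fun x => (hderiv x).fderiv]
  exact (lipschitzWith_of_norm_sub_sub_le_mul_sq (by positivity) hf').continuous
end

section
/- Let n ∈ ℕ, let f : ℝ^n → ℝ be convex and differentiable at x₀ ∈ ℝ^n, let r > 0 and C ≥ 0, and let φ be twice continuously differentiable on the open ball B(x₀, 2r) with |y · (Hess φ(z)) y| ≤ C|y|² for all z ∈ B(x₀, 2r) and all y ∈ ℝ^n. Suppose that f − φ has a local maximum at x₀ over B(x₀, 2r), i.e. f(z) − φ(z) ≤ f(x₀) − φ(x₀) for all z ∈ B(x₀, 2r). Then ∇f(x₀) = ∇φ(x₀), and for every y ∈ ℝ^n with |y| ≤ r: 0 ≤ f(x₀ + y) − f(x₀) − y·∇f(x₀) ≤ (C/2)|y|². -/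
open scoped InnerProductSpace

/-!
At a local maximum of `f - φ` the first-order condition gives `f'(x₀) = φ'(x₀)`. Convexity of
`f` bounds `f(x₀ + y) - f(x₀) - f'(x₀) y` from below by `0`. Above, the maximality of `x₀`
bounds it by `φ(x₀ + y) - φ(x₀) - φ'(x₀) y`, and this second-order Taylor remainder is at most
`(C/2)|y|²` because `t ↦ φ(x₀ + t y) - t φ'(x₀) y - (C/2)|y|² t²` is antitone on `[0, 1]`.
-/

open Set

theorem antitoneOn_Icc_of_hasDerivAt_nonpos {F F' : ℝ → ℝ} {a b : ℝ}
    (hF : ∀ t ∈ Icc a b, HasDerivAt F (F' t) t) (hF' : ∀ t ∈ Ioo a b, F' t ≤ 0) :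
    AntitoneOn F (Icc a b) :=
  antitoneOn_of_hasDerivWithinAt_nonpos (convex_Icc a b)
    (fun t ht => (hF t ht).continuousAt.continuousWithinAt)
    (fun t ht => by
      rw [interior_Icc] at ht ⊢
      exact (hF t (Ioo_subset_Icc_self ht)).hasDerivWithinAt)
    (fun t ht => hF' t (by rwa [interior_Icc] at ht))

theorem sub_sub_le_half_of_hasDerivAt_of_le {g g' g'' : ℝ → ℝ} {K : ℝ}
    (hg : ∀ t ∈ Icc (0 : ℝ) 1, HasDerivAt g (g' t) t)
    (hg' : ∀ t ∈ Icc (0 : ℝ) 1, HasDerivAt g' (g'' t) t)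
    (hK : ∀ t ∈ Icc (0 : ℝ) 1, g'' t ≤ K) :
    g 1 - g 0 - g' 0 ≤ K / 2 := by
  have hslope : AntitoneOn (fun t => g' t - K * t) (Icc 0 1) := by
    refine antitoneOn_Icc_of_hasDerivAt_nonpos (F' := fun t => g'' t - K) (fun t ht => ?_)
      (fun t ht => by linarith [hK t (Ioo_subset_Icc_self ht)])
    simpa using (hg' t ht).fun_sub ((hasDerivAt_id' t).const_mul K)
  have hrem : AntitoneOn (fun t => g t - t * g' 0 - K / 2 * t ^ 2) (Icc 0 1) := by
    refine antitoneOn_Icc_of_hasDerivAt_nonpos (F' := fun t => g' t - g' 0 - K * t)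
      (fun t ht => ?_) (fun t ht => ?_)
    · refine (((hg t ht).fun_sub ((hasDerivAt_id' t).mul_const (g' 0))).fun_sub
        ((hasDerivAt_pow 2 t).const_mul (K / 2))).congr_deriv ?_
      ring
    · have := hslope (left_mem_Icc.2 zero_le_one) (Ioo_subset_Icc_self ht) ht.1.le
      simp only [mul_zero, sub_zero] at this
      linarith
  have := hrem (left_mem_Icc.2 zero_le_one) (right_mem_Icc.2 zero_le_one) zero_le_one
  simp only at this
  linarith

section

variable {E : Type*} [NormedAddCommGroup E] [NormedSpace ℝ E]

theorem IsLocalMax.fderiv_eq_of_sub {f φ : E → ℝ} {x : E}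
    (h : IsLocalMax (fun z => f z - φ z) x) (hf : DifferentiableAt ℝ f x)
    (hφ : DifferentiableAt ℝ φ x) : fderiv ℝ f x = fderiv ℝ φ x := by
  rw [← sub_eq_zero, ← fderiv_fun_sub hf hφ]
  exact h.fderiv_eq_zero

theorem ConvexOn.fderiv_apply_le_sub {f : E → ℝ} {s : Set E} (hf : ConvexOn ℝ s f) {x y : E}
    (hx : x ∈ s) (hxy : x + y ∈ s) (hdf : DifferentiableAt ℝ f x) :
    fderiv ℝ f x y ≤ f (x + y) - f x := by
  have hline : HasDerivAt (f ∘ AffineMap.lineMap (k := ℝ) x (x + y)) (fderiv ℝ f x y) 0 := by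
    have hdf' : HasFDerivAt f (fderiv ℝ f x) (AffineMap.lineMap x (x + y) (0 : ℝ)) := by
      simpa using hdf.hasFDerivAt
    simpa using hdf'.comp_hasDerivAt 0 AffineMap.hasDerivAt_lineMap
  have := (hf.comp_affineMap (AffineMap.lineMap (k := ℝ) x (x + y))).le_slope_of_hasDerivAt
    (x := 0) (y := 1) (by simpa) (by simpa) one_pos hline
  simpa [slope_def_field] using this

theorem ContDiffOn.sub_sub_fderiv_le_half {φ : E → ℝ} {s : Set E} (hφ : ContDiffOn ℝ 2 φ s)
    (hs : IsOpen s) (hs' : Convex ℝ s) {x y : E} (hx : x ∈ s) (hxy : x + y ∈ s) {K : ℝ}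
    (hK : ∀ z ∈ s, fderiv ℝ (fderiv ℝ φ) z y y ≤ K) :
    φ (x + y) - φ x - fderiv ℝ φ x y ≤ K / 2 := by
  have hseg : ∀ t ∈ Icc (0 : ℝ) 1, x + t • y ∈ s := fun t ht => hs'.add_smul_mem hx hxy ht
  have hpath (t : ℝ) : HasDerivAt (fun t : ℝ => x + t • y) y t := by
    simpa using ((hasDerivAt_id t).smul_const y).const_add x
  have hφt : ∀ t ∈ Icc (0 : ℝ) 1, ContDiffAt ℝ 2 φ (x + t • y) :=
    fun t ht => hφ.contDiffAt (hs.mem_nhds (hseg t ht))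
  simpa using sub_sub_le_half_of_hasDerivAt_of_le (g := fun t => φ (x + t • y))
    (g' := fun t => fderiv ℝ φ (x + t • y) y)
    (g'' := fun t => fderiv ℝ (fderiv ℝ φ) (x + t • y) y y)
    (fun t ht => ((hφt t ht).differentiableAt (by norm_num)).hasFDerivAt.comp_hasDerivAt t
      (hpath t))
    (fun t ht => (ContinuousLinearMap.apply ℝ ℝ y).hasFDerivAt.comp_hasDerivAt t
      ((((hφt t ht).fderiv_right (m := 1) (by norm_num)).differentiableAt one_ne_zero
        ).hasFDerivAt.comp_hasDerivAt t (hpath t)))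
    (fun t ht => hK _ (hseg t ht))

end

theorem stmt7_general {n : ℕ} (f φ : EuclideanSpace ℝ (Fin n) → ℝ)
    (x₀ : EuclideanSpace ℝ (Fin n)) (r C : ℝ) (hr : 0 < r)
    (hf : ConvexOn ℝ Set.univ f) (hdf : DifferentiableAt ℝ f x₀)
    (hφ : ContDiffOn ℝ 2 φ (Metric.ball x₀ (2 * r)))
    (hHess : ∀ z ∈ Metric.ball x₀ (2 * r), ∀ y : EuclideanSpace ℝ (Fin n),
      |fderiv ℝ (fderiv ℝ φ) z y y| ≤ C * ‖y‖ ^ 2)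
    (hmax : ∀ z ∈ Metric.ball x₀ (2 * r), f z - φ z ≤ f x₀ - φ x₀) :
    gradient f x₀ = gradient φ x₀ ∧
    ∀ y : EuclideanSpace ℝ (Fin n), ‖y‖ ≤ r →
      0 ≤ f (x₀ + y) - f x₀ - ⟪y, gradient f x₀⟫_ℝ ∧
      f (x₀ + y) - f x₀ - ⟪y, gradient f x₀⟫_ℝ ≤ C / 2 * ‖y‖ ^ 2 := by
  have hx₀ : x₀ ∈ Metric.ball x₀ (2 * r) := Metric.mem_ball_self (by linarith)
  have hball : Metric.ball x₀ (2 * r) ∈ nhds x₀ := Metric.isOpen_ball.mem_nhds hx₀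
  have hdφ : DifferentiableAt ℝ φ x₀ := (hφ.contDiffAt hball).differentiableAt (by norm_num)
  have hfφ : fderiv ℝ f x₀ = fderiv ℝ φ x₀ :=
    IsLocalMax.fderiv_eq_of_sub (Filter.mem_of_superset hball hmax) hdf hdφ
  refine ⟨by rw [gradient, gradient, hfφ], fun y hy => ?_⟩
  have hxy : x₀ + y ∈ Metric.ball x₀ (2 * r) := by
    rw [Metric.mem_ball, dist_self_add_left]
    linarith
  have hlower := hf.fderiv_apply_le_sub (mem_univ x₀) (mem_univ (x₀ + y)) hdf
  have htaylor := hφ.sub_sub_fderiv_le_half Metric.isOpen_ball (convex_ball x₀ (2 * r)) hx₀ hxy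
    (fun z hz => (abs_le.mp (hHess z hz y)).2)
  have hmax_y := hmax (x₀ + y) hxy
  rw [real_inner_comm, inner_gradient_left]
  rw [hfφ] at hlower ⊢
  constructor <;> linarith

/-- If `f` is convex and differentiable at `x₀`, `φ` is `C²` on
`B(x₀, 2r)` with Hessian quadratic form bounded by `C|y|²`, and `f − φ` has a local maximum
at `x₀` over `B(x₀, 2r)`, then `∇f(x₀) = ∇φ(x₀)` and
`0 ≤ f(x₀+y) − f(x₀) − y·∇f(x₀) ≤ (C/2)|y|²` for every `|y| ≤ r`. -/
theorem stmt7 {n : ℕ} (f φ : EuclideanSpace ℝ (Fin n) → ℝ)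
    (x₀ : EuclideanSpace ℝ (Fin n)) (r C : ℝ) (hr : 0 < r) (hC : 0 ≤ C)
    (hf : ConvexOn ℝ Set.univ f) (hdf : DifferentiableAt ℝ f x₀)
    (hφ : ContDiffOn ℝ 2 φ (Metric.ball x₀ (2 * r)))
    (hHess : ∀ z ∈ Metric.ball x₀ (2 * r), ∀ y : EuclideanSpace ℝ (Fin n),
      |fderiv ℝ (fderiv ℝ φ) z y y| ≤ C * ‖y‖ ^ 2)
    (hmax : ∀ z ∈ Metric.ball x₀ (2 * r), f z - φ z ≤ f x₀ - φ x₀) :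
    gradient f x₀ = gradient φ x₀ ∧
    ∀ y : EuclideanSpace ℝ (Fin n), ‖y‖ ≤ r →
      0 ≤ f (x₀ + y) - f x₀ - ⟪y, gradient f x₀⟫_ℝ ∧
      f (x₀ + y) - f x₀ - ⟪y, gradient f x₀⟫_ℝ ≤ C / 2 * ‖y‖ ^ 2 :=
  stmt7_general f φ x₀ r C hr hf hdf hφ hHess hmax
end

section
/- Let n ∈ ℕ, x₀ ∈ ℝ^n, r > 0, C ≥ 0, δ ≥ 0. Let u, v : ℝ^n → ℝ be such that u is convex, u and v are differentiable at x₀, and: (i) v(x₀ + y) − v(x₀) − y·∇v(x₀) ≤ C|y|² for all |y| ≤ r; (ii) |u(x₀ + y) − v(x₀ + y)| ≤ δ for all |y| ≤ r. Then for every λ ∈ (0, r], |∇u(x₀) − ∇v(x₀)| ≤ 2δ/λ + Cλ. In particular, if √δ ≤ r, then |∇u(x₀) − ∇v(x₀)| ≤ (2 + C)√δ. -/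
/-!
Convexity puts `u` above its tangent plane at `x₀`, while (i) puts `v` below its tangent
paraboloid; since `u` and `v` are `δ`-close on the ball, `⟪y, ∇u(x₀) - ∇v(x₀)⟫ ≤ 2δ + C|y|²`
for `|y| ≤ r`. Taking `y` of length `λ` in the direction of `∇u(x₀) - ∇v(x₀)` gives the first
bound, `λ = √δ` the second (and `λ → 0` when `δ = 0`).
-/

open scoped InnerProductSpace
open Filter Topology

theorem ConvexOn.le_sub_of_hasFDerivAt {E : Type*} [NormedAddCommGroup E] [NormedSpace ℝ E]
    {f : E → ℝ} {f' : E →L[ℝ] ℝ} {x : E} (hf : ConvexOn ℝ Set.univ f) (hf' : HasFDerivAt f f' x)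
    (y : E) : f' (y - x) ≤ f y - f x := by
  let L : ℝ →ᵃ[ℝ] E := AffineMap.lineMap x y
  have hline : ConvexOn ℝ Set.univ (f ∘ L) := hf.comp_affineMap L
  have hderiv : HasDerivAt (f ∘ L) (f' (y - x)) 0 :=
    (AffineMap.lineMap_apply_zero x y (k := ℝ) ▸ hf').comp_hasDerivAt 0
      AffineMap.hasDerivAt_lineMap
  simpa [L, slope_def_field] using
    hline.le_slope_of_hasDerivAt (Set.mem_univ 0) (Set.mem_univ 1) zero_lt_one hderiv

theorem mul_norm_le_of_inner_le {E : Type*} [NormedAddCommGroup E] [InnerProductSpace ℝ E]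
    {g : E} {a C r lam : ℝ} (hC : 0 ≤ C)
    (h : ∀ y : E, ‖y‖ ≤ r → ⟪y, g⟫_ℝ ≤ a + C * ‖y‖ ^ 2) (hlam : 0 ≤ lam) (hlamr : lam ≤ r) :
    lam * ‖g‖ ≤ a + C * lam ^ 2 := by
  rcases eq_or_ne g 0 with rfl | hg
  · have ha : 0 ≤ a := by simpa using h 0 (by simpa using hlam.trans hlamr)
    simp only [norm_zero, mul_zero]
    positivity
  · have hng : 0 < ‖g‖ := norm_pos_iff.mpr hg
    have hy : ‖(lam / ‖g‖) • g‖ = lam := by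
      rw [norm_smul, Real.norm_of_nonneg (by positivity), div_mul_cancel₀ _ hng.ne']
    have hinner : ⟪(lam / ‖g‖) • g, g⟫_ℝ = lam * ‖g‖ := by
      rw [real_inner_smul_left, real_inner_self_eq_norm_sq]
      field_simp
    simpa only [hinner, hy] using h _ (hy.le.trans hlamr)

theorem stmt8_general {n : ℕ} (x₀ : EuclideanSpace ℝ (Fin n)) (r C δ : ℝ)
    (hr : 0 < r) (hC : 0 ≤ C)
    (u v : EuclideanSpace ℝ (Fin n) → ℝ)
    (hu : ConvexOn ℝ Set.univ u)
    (hdu : DifferentiableAt ℝ u x₀)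
    (hv : ∀ y : EuclideanSpace ℝ (Fin n), ‖y‖ ≤ r →
      v (x₀ + y) - v x₀ - ⟪y, gradient v x₀⟫_ℝ ≤ C * ‖y‖ ^ 2)
    (huv : ∀ y : EuclideanSpace ℝ (Fin n), ‖y‖ ≤ r → |u (x₀ + y) - v (x₀ + y)| ≤ δ) :
    (∀ lam : ℝ, 0 < lam → lam ≤ r →
      ‖gradient u x₀ - gradient v x₀‖ ≤ 2 * δ / lam + C * lam) ∧
    (Real.sqrt δ ≤ r → ‖gradient u x₀ - gradient v x₀‖ ≤ (2 + C) * Real.sqrt δ) := by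
  have hdir : ∀ y, ‖y‖ ≤ r →
      ⟪y, gradient u x₀ - gradient v x₀⟫_ℝ ≤ 2 * δ + C * ‖y‖ ^ 2 := by
    intro y hy
    have htangent := hu.le_sub_of_hasFDerivAt hdu.hasGradientAt.hasFDerivAt (x₀ + y)
    rw [add_sub_cancel_left, InnerProductSpace.toDual_apply_apply, real_inner_comm] at htangent
    have hclose_y := abs_le.mp (huv y hy)
    have hclose₀ := abs_le.mp (by simpa using huv 0 (by simpa using hr.le))
    rw [inner_sub_right]
    linarith [hv y hy]
  have hbound : ∀ lam, 0 < lam → lam ≤ r →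
      ‖gradient u x₀ - gradient v x₀‖ ≤ 2 * δ / lam + C * lam := by
    intro lam hlam hlamr
    rw [div_add' _ _ _ hlam.ne', le_div_iff₀' hlam]
    linarith [mul_norm_le_of_inner_le hC hdir hlam.le hlamr]
  refine ⟨hbound, fun hδr => ?_⟩
  rcases (Real.sqrt_nonneg δ).eq_or_lt with hδ | hδ
  · rw [← hδ, mul_zero]
    have hδ' : δ ≤ 0 := Real.sqrt_eq_zero'.mp hδ.symm
    have hlim : Tendsto (C * ·) (𝓝[>] 0) (𝓝 0) :=
      ((continuous_const_mul C).tendsto' 0 0 (mul_zero C)).mono_left nhdsWithin_le_nhds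
    refine ge_of_tendsto hlim ?_
    filter_upwards [Ioc_mem_nhdsGT hr] with lam ⟨hlam, hlamr⟩
    have : 2 * δ / lam ≤ 0 := div_nonpos_of_nonpos_of_nonneg (by linarith) hlam.le
    linarith [hbound lam hlam hlamr]
  · have := hbound _ hδ hδr
    rwa [mul_div_assoc, Real.div_sqrt, ← add_mul] at this

/-- If `u` is convex, `u` and `v` are differentiable at `x₀`,
`v(x₀+y) − v(x₀) − y·∇v(x₀) ≤ C|y|²` for `|y| ≤ r`, and `|u − v| ≤ δ` on the ball of radius
`r` around `x₀`, then `|∇u(x₀) − ∇v(x₀)| ≤ 2δ/λ + Cλ` for every `λ ∈ (0, r]`; in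
particular `|∇u(x₀) − ∇v(x₀)| ≤ (2 + C)√δ` whenever `√δ ≤ r`. -/
theorem stmt8 {n : ℕ} (x₀ : EuclideanSpace ℝ (Fin n)) (r C δ : ℝ)
    (hr : 0 < r) (hC : 0 ≤ C) (hδ : 0 ≤ δ)
    (u v : EuclideanSpace ℝ (Fin n) → ℝ)
    (hu : ConvexOn ℝ Set.univ u)
    (hdu : DifferentiableAt ℝ u x₀) (hdv : DifferentiableAt ℝ v x₀)
    (hv : ∀ y : EuclideanSpace ℝ (Fin n), ‖y‖ ≤ r →
      v (x₀ + y) - v x₀ - ⟪y, gradient v x₀⟫_ℝ ≤ C * ‖y‖ ^ 2)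
    (huv : ∀ y : EuclideanSpace ℝ (Fin n), ‖y‖ ≤ r → |u (x₀ + y) - v (x₀ + y)| ≤ δ) :
    (∀ lam : ℝ, 0 < lam → lam ≤ r →
      ‖gradient u x₀ - gradient v x₀‖ ≤ 2 * δ / lam + C * lam) ∧
    (Real.sqrt δ ≤ r → ‖gradient u x₀ - gradient v x₀‖ ≤ (2 + C) * Real.sqrt δ) :=
  stmt8_general x₀ r C δ hr hC u v hu hdu hv huv
end

section
/- Let n ∈ ℕ and x₀ ∈ ℝ^n. Let f_N : ℝ^n → ℝ (N ∈ ℕ) be convex functions, each differentiable at x₀, converging pointwise on ℝ^n to a function f : ℝ^n → ℝ that is differentiable at x₀. Then ∇f_N(x₀) → ∇f(x₀) as N → ∞. -/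
/-!
A convex function lies above its tangent planes: `f_N x₀ + ∇f_N(x₀) ⬝ t v ≤ f_N (x₀ + t v)`.
Dividing by `t > 0` and letting `N → ∞` bounds `limsup ∇f_N(x₀) ⬝ v` by a difference quotient
of `f`, which tends to `∇f(x₀) ⬝ v` as `t → 0⁺`. Applied to `±v`, this gives convergence of every
directional derivative, and in finite dimension that is convergence of the derivatives.
-/

open Filter Topology

section

variable {E : Type*} [NormedAddCommGroup E] [NormedSpace ℝ E]

theorem ConvexOn.fderiv_apply_sub_le {s : Set E} {g : E → ℝ} (hg : ConvexOn ℝ s g) {x y : E}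
    (hx : x ∈ s) (hy : y ∈ s) (hgx : DifferentiableAt ℝ g x) :
    fderiv ℝ g x (y - x) ≤ g y - g x := by
  let γ : ℝ →ᵃ[ℝ] E := AffineMap.lineMap x y
  have hγ : HasDerivAt (g ∘ γ) (fderiv ℝ g x (y - x)) 0 := by
    refine HasFDerivAt.comp_hasDerivAt (l := g) 0 ?_ AffineMap.hasDerivAt_lineMap
    simpa [γ] using hgx.hasFDerivAt
  simpa [slope, γ] using (hg.comp_affineMap γ).le_slope_of_hasDerivAt
    (by simpa [γ] using hx) (by simpa [γ] using hy) one_pos hγ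

variable {ι : Type*} {l : Filter ι} {F : ι → E → ℝ} {f : E → ℝ} {x : E}

theorem eventually_fderiv_apply_lt_of_convexOn (hF : ∀ i, ConvexOn ℝ Set.univ (F i))
    (hFx : ∀ i, DifferentiableAt ℝ (F i) x) (hfx : DifferentiableAt ℝ f x)
    (hlim : ∀ y, Tendsto (fun i => F i y) l (𝓝 (f y))) (v : E) {c : ℝ}
    (hc : fderiv ℝ f x v < c) : ∀ᶠ i in l, fderiv ℝ (F i) x v < c := by
  obtain ⟨t, ht_slope, ht_pos⟩ : ∃ t : ℝ, t⁻¹ * (f (x + t • v) - f x) < c ∧ 0 < t :=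
    (((hfx.hasFDerivAt.hasLineDerivAt v).tendsto_slope_zero_right.eventually
      (eventually_lt_nhds hc)).and self_mem_nhdsWithin).exists
  have hslopes : Tendsto (fun i => t⁻¹ * (F i (x + t • v) - F i x)) l
      (𝓝 (t⁻¹ * (f (x + t • v) - f x))) :=
    ((hlim _).sub (hlim _)).const_mul _
  filter_upwards [hslopes.eventually (eventually_lt_nhds ht_slope)] with i hi
  calc fderiv ℝ (F i) x v = t⁻¹ * fderiv ℝ (F i) x (x + t • v - x) := by
        simp [ht_pos.ne']
    _ ≤ t⁻¹ * (F i (x + t • v) - F i x) := by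
        gcongr
        exact (hF i).fderiv_apply_sub_le trivial trivial (hFx i)
    _ < c := hi

theorem tendsto_fderiv_apply_of_convexOn (hF : ∀ i, ConvexOn ℝ Set.univ (F i))
    (hFx : ∀ i, DifferentiableAt ℝ (F i) x) (hfx : DifferentiableAt ℝ f x)
    (hlim : ∀ y, Tendsto (fun i => F i y) l (𝓝 (f y))) (v : E) :
    Tendsto (fun i => fderiv ℝ (F i) x v) l (𝓝 (fderiv ℝ f x v)) := by
  refine tendsto_order.2 ⟨fun a ha => ?_,
    fun c hc => eventually_fderiv_apply_lt_of_convexOn hF hFx hfx hlim v hc⟩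
  filter_upwards [eventually_fderiv_apply_lt_of_convexOn hF hFx hfx hlim (-v)
    (c := -a) (by simpa using ha)] with i hi
  simpa using hi

end

theorem ContinuousLinearMap.tendsto_of_forall_tendsto_apply {𝕜 E F ι : Type*}
    [NontriviallyNormedField 𝕜] [CompleteSpace 𝕜] [NormedAddCommGroup E] [NormedSpace 𝕜 E]
    [FiniteDimensional 𝕜 E] [NormedAddCommGroup F] [NormedSpace 𝕜 F] {l : Filter ι}
    {L : ι → E →L[𝕜] F} {L₀ : E →L[𝕜] F} (h : ∀ v, Tendsto (fun i => L i v) l (𝓝 (L₀ v))) :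
    Tendsto L l (𝓝 L₀) := by
  let b := Module.finBasis 𝕜 E
  obtain ⟨C, -, hC⟩ := b.exists_opNorm_le (F := F)
  have hdist : Tendsto (fun i => ∑ j, ‖(L i - L₀) (b j)‖) l (𝓝 0) := by
    simpa using tendsto_finsetSum Finset.univ fun j _ =>
      (tendsto_iff_norm_sub_tendsto_zero.1 (h (b j)))
  rw [tendsto_iff_norm_sub_tendsto_zero]
  refine squeeze_zero (fun _ => norm_nonneg _) (fun i => hC ?_ fun j => ?_)
    (by simpa using hdist.const_mul C)
  · exact Finset.sum_nonneg fun _ _ => norm_nonneg _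
  · exact Finset.single_le_sum (f := fun j => ‖(L i - L₀) (b j)‖) (fun _ _ => norm_nonneg _)
      (Finset.mem_univ j)

theorem tendsto_fderiv_of_convexOn {E ι : Type*} [NormedAddCommGroup E] [NormedSpace ℝ E]
    [FiniteDimensional ℝ E] {l : Filter ι} {F : ι → E → ℝ} {f : E → ℝ} {x : E}
    (hF : ∀ i, ConvexOn ℝ Set.univ (F i)) (hFx : ∀ i, DifferentiableAt ℝ (F i) x)
    (hfx : DifferentiableAt ℝ f x) (hlim : ∀ y, Tendsto (fun i => F i y) l (𝓝 (f y))) :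
    Tendsto (fun i => fderiv ℝ (F i) x) l (𝓝 (fderiv ℝ f x)) :=
  ContinuousLinearMap.tendsto_of_forall_tendsto_apply
    (tendsto_fderiv_apply_of_convexOn hF hFx hfx hlim)

/-- If convex functions `f_N : ℝ^n → ℝ`, each differentiable at `x₀`,
converge pointwise to a function `f` differentiable at `x₀`, then `∇f_N(x₀) → ∇f(x₀)`. -/
theorem stmt10 {n : ℕ} (x₀ : EuclideanSpace ℝ (Fin n))
    (fN : ℕ → EuclideanSpace ℝ (Fin n) → ℝ) (f : EuclideanSpace ℝ (Fin n) → ℝ)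
    (hconv : ∀ N, ConvexOn ℝ Set.univ (fN N))
    (hdN : ∀ N, DifferentiableAt ℝ (fN N) x₀)
    (hd : DifferentiableAt ℝ f x₀)
    (hptwise : ∀ x, Tendsto (fun N => fN N x) atTop (𝓝 (f x))) :
    Tendsto (fun N => gradient (fN N) x₀) atTop (𝓝 (gradient f x₀)) :=
  ((InnerProductSpace.toDual ℝ _).symm.continuous.tendsto _).comp
    (tendsto_fderiv_of_convexOn hconv hdN hd hptwise)
end

section
/- Let D ∈ ℕ and equip the space of real D×D matrices with the entrywise inner product a·b = Σ_{i,j} a_{ij} b_{ij}. Let ξ : ℝ^{D×D} → ℝ be differentiable and let ∇ξ denote its gradient with respect to this inner product. Assume: (i) ξ(a) = ξ(aᵀ) for every a ∈ ℝ^{D×D}; (ii) if a and b are symmetric positive semidefinite and a − b is positive semidefinite, then ξ(a) ≥ ξ(b). Then for every symmetric matrix a, the matrix ∇ξ(a) is symmetric; and for every symmetric positive semidefinite matrix a, the matrix ∇ξ(a) is symmetric positive semidefinite. -/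
open Matrix
open scoped ComplexOrder
attribute [local instance] Matrix.normedAddCommGroup Matrix.normedSpace

/-!
Both claims come from first-order conditions. The linear symmetry `a ↦ aᵀ` leaves `ξ` invariant
and fixes a symmetric `a`, so it leaves the derivative of `ξ` at `a` invariant; testing this on
matrix units gives `(∇ξ a)ᵀ = ∇ξ a`. If `a` is positive semidefinite, then so is `a + t • v vᵀ`
for `t ≥ 0`, so by monotonicity `ξ` is minimal at `a` along that ray, and the one-sided derivative
`vᵀ (∇ξ a) v` is nonnegative.
-/

theorem HasFDerivAt.comp_eq_of_comp_eq {𝕜 E F : Type*} [NontriviallyNormedField 𝕜]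
    [NormedAddCommGroup E] [NormedSpace 𝕜 E] [NormedAddCommGroup F] [NormedSpace 𝕜 F]
    {f : E → F} {f' : E →L[𝕜] F} {T : E →L[𝕜] E} {a : E}
    (hf : HasFDerivAt f f' a) (hfT : f ∘ T = f) (hTa : T a = a) : f'.comp T = f' := by
  have hcomp : HasFDerivAt (f ∘ T) (f'.comp T) a := (hTa ▸ hf).comp a T.hasFDerivAt
  exact (hfT ▸ hcomp).unique hf

theorem HasFDerivAt.nonneg_of_isMinOn_segment {E : Type*} [NormedAddCommGroup E]
    [NormedSpace ℝ E] {f : E → ℝ} {f' : E →L[ℝ] ℝ} {a y : E}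
    (hf : HasFDerivAt f f' a) (hmin : IsMinOn f (segment ℝ a (a + y)) a) : 0 ≤ f' y :=
  hmin.localize.hasFDerivWithinAt_nonneg hf.hasFDerivWithinAt
    (mem_posTangentConeAt_of_segment_subset subset_rfl)

namespace Matrix

variable {m n : Type*} [Fintype m] [Fintype n]

theorem sum_sum_mul_single_one {R : Type*} [NonAssocSemiring R] [DecidableEq m] [DecidableEq n]
    (G : Matrix m n R) (i : m) (j : n) : ∑ k, ∑ l, G k l * single i j 1 k l = G i j := by
  simp [single_apply, ite_and]

theorem sum_sum_mul_vecMulVec {R : Type*} [CommSemiring R] (G : Matrix n n R) (v w : n → R) :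
    ∑ i, ∑ j, G i j * vecMulVec v w i j = v ⬝ᵥ G *ᵥ w := by
  simp only [vecMulVec_apply, dotProduct, mulVec, Finset.mul_sum]
  exact Finset.sum_congr rfl fun i _ => Finset.sum_congr rfl fun j _ => by ring

omit [Fintype n] in
theorem PosSemidef.of_mem_segment_add {𝕜 : Type*} [RCLike 𝕜] {a y x : Matrix n n 𝕜}
    (ha : a.PosSemidef) (hy : y.PosSemidef) (hx : x ∈ segment ℝ a (a + y)) :
    x.PosSemidef ∧ (x - a).PosSemidef := by
  obtain ⟨t, ⟨ht, -⟩, rfl⟩ := (segment_eq_image' ℝ a (a + y)).subset hx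
  simp only [add_sub_cancel_left]
  exact ⟨ha.add (hy.smul ht), hy.smul ht⟩

variable {ξ : Matrix n n ℝ → ℝ} {f' : Matrix n n ℝ →L[ℝ] ℝ}
  {G a : Matrix n n ℝ}

theorem isSymm_of_hasFDerivAt_of_transpose_invariant [DecidableEq n] (hf : HasFDerivAt ξ f' a)
    (hG : ∀ h, f' h = ∑ i, ∑ j, G i j * h i j) (hξ : ∀ b, ξ bᵀ = ξ b) (ha : a.IsSymm) :
    G.IsSymm := by
  let T : Matrix n n ℝ →L[ℝ] Matrix n n ℝ :=
    LinearMap.toContinuousLinearMap (transposeLinearEquiv n n ℝ ℝ).toLinearMap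
  have hinv : f'.comp T = f' := hf.comp_eq_of_comp_eq (funext hξ) ha
  refine IsSymm.ext fun i j => ?_
  simpa [T, hG, sum_sum_mul_single_one] using congr($hinv (single j i 1)).symm

theorem posSemidef_of_hasFDerivAt_of_monotone (hf : HasFDerivAt ξ f' a)
    (hG : ∀ h, f' h = ∑ i, ∑ j, G i j * h i j)
    (hmono : ∀ b c, b.PosSemidef → c.PosSemidef → (b - c).PosSemidef → ξ c ≤ ξ b)
    (hGsymm : G.IsSymm) (ha : a.PosSemidef) : G.PosSemidef := by
  refine .of_dotProduct_mulVec_nonneg (isHermitian_iff_isSymm.mpr hGsymm) fun v => ?_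
  have hv : (vecMulVec v v).PosSemidef := by simpa using posSemidef_vecMulVec_self_star v
  have hmin : IsMinOn ξ (segment ℝ a (a + vecMulVec v v)) a := fun x hx =>
    let ⟨hx, hxa⟩ := ha.of_mem_segment_add hv hx
    hmono x a hx ha hxa
  have hderiv : 0 ≤ f' (vecMulVec v v) := hf.nonneg_of_isMinOn_segment hmin
  rw [hG, sum_sum_mul_vecMulVec] at hderiv
  simpa only [star_trivial] using hderiv

end Matrix

/-- Let `ξ : ℝ^{D×D} → ℝ` be differentiable with gradient `Dξ` with
respect to the entrywise inner product (i.e. the Fréchet derivative of `ξ` at `a` is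
`h ↦ Σ_{i,j} (Dξ a)_{ij} h_{ij}`). If `ξ(a) = ξ(aᵀ)` for all `a`, and `ξ` is monotone on
positive semidefinite matrices (`a, b, a − b` PSD implies `ξ(b) ≤ ξ(a)`), then `Dξ a` is
symmetric whenever `a` is symmetric, and `Dξ a` is positive semidefinite whenever `a` is. -/
theorem stmt11 {D : ℕ}
    (ξ : Matrix (Fin D) (Fin D) ℝ → ℝ)
    (Dξ : Matrix (Fin D) (Fin D) ℝ → Matrix (Fin D) (Fin D) ℝ)
    (hdiff : ∀ a : Matrix (Fin D) (Fin D) ℝ,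
      ∃ f' : Matrix (Fin D) (Fin D) ℝ →L[ℝ] ℝ,
        HasFDerivAt ξ f' a ∧ ∀ h : Matrix (Fin D) (Fin D) ℝ, f' h = ∑ i, ∑ j, Dξ a i j * h i j)
    (hsym : ∀ a : Matrix (Fin D) (Fin D) ℝ, ξ aᵀ = ξ a)
    (hmono : ∀ a b : Matrix (Fin D) (Fin D) ℝ,
      a.PosSemidef → b.PosSemidef → (a - b).PosSemidef → ξ b ≤ ξ a) :
    (∀ a : Matrix (Fin D) (Fin D) ℝ, a.IsSymm → (Dξ a).IsSymm) ∧
    (∀ a : Matrix (Fin D) (Fin D) ℝ, a.PosSemidef → (Dξ a).PosSemidef) := by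
  have hgrad_symm : ∀ a : Matrix (Fin D) (Fin D) ℝ, a.IsSymm → (Dξ a).IsSymm := fun a ha =>
    let ⟨_, hf, hG⟩ := hdiff a
    isSymm_of_hasFDerivAt_of_transpose_invariant hf hG hsym ha
  refine ⟨hgrad_symm, fun a ha => ?_⟩
  obtain ⟨_, hf, hG⟩ := hdiff a
  exact posSemidef_of_hasFDerivAt_of_monotone hf hG hmono
    (hgrad_symm a (isHermitian_iff_isSymm.mp ha.isHermitian)) ha
end

section
/- Let S be a measurable space, P a finite measure on S, N ≥ 1 an integer, k ∈ ℕ, y, z ∈ ℝ^k, ε > 0, and L ≥ 0. Let H : S → ℝ and m : S → ℝ^k be measurable, and let q : ℝ^k → ℝ be measurable with |q(w) − q(z)| ≤ Lε for all w with |w − z| ≤ ε. Let Σ = {σ ∈ S : |m(σ) − z| ≤ ε}, and assume 0 < ∫_Σ e^{H} dP and 0 < ∫_S e^{H − (N/2) q(m(σ)) + N y·m(σ)} dP < ∞. Then (1/N) log ∫_Σ e^{H(σ)} dP(σ) ≤ (1/N) log ∫_S e^{H(σ) − (N/2) q(m(σ)) + N y·m(σ)} dP(σ) − y·z + (1/2)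 q(z) + Lε/2 + |y| ε. -/
open MeasureTheory
open scoped InnerProductSpace

/-- Upper bound for the constrained free energy: with
`Σ = {σ : |m(σ) − z| ≤ ε}` and `|q(w) − q(z)| ≤ Lε` for `|w − z| ≤ ε`,
`(1/N) log ∫_Σ e^H ≤ (1/N) log ∫_S e^{H − (N/2) q(m) + N y·m} − y·z + q(z)/2 + Lε/2 + |y|ε`. -/
theorem stmt15 {S : Type*} [MeasurableSpace S] (P : Measure S) [IsFiniteMeasure P]
    (N : ℕ) (hN : 1 ≤ N) (k : ℕ) (y z : EuclideanSpace ℝ (Fin k)) (ε L : ℝ)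
    (hε : 0 < ε) (hL : 0 ≤ L)
    (H : S → ℝ) (hH : Measurable H)
    (m : S → EuclideanSpace ℝ (Fin k)) (hm : Measurable m)
    (q : EuclideanSpace ℝ (Fin k) → ℝ) (hq : Measurable q)
    (hqz : ∀ w : EuclideanSpace ℝ (Fin k), ‖w - z‖ ≤ ε → |q w - q z| ≤ L * ε)
    (A : Set S) (hA : A = {σ | ‖m σ - z‖ ≤ ε})
    (hpos : 0 < ∫ σ in A, Real.exp (H σ) ∂P)
    (hint : Integrable
      (fun σ => Real.exp (H σ - ((N : ℝ) / 2) * q (m σ) + N * ⟪y, m σ⟫_ℝ)) P)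
    (hpos2 : 0 < ∫ σ, Real.exp (H σ - ((N : ℝ) / 2) * q (m σ) + N * ⟪y, m σ⟫_ℝ) ∂P) :
    (1 / (N : ℝ)) * Real.log (∫ σ in A, Real.exp (H σ) ∂P) ≤
      (1 / (N : ℝ)) *
          Real.log (∫ σ, Real.exp (H σ - ((N : ℝ) / 2) * q (m σ) + N * ⟪y, m σ⟫_ℝ) ∂P)
        - ⟪y, z⟫_ℝ + (1 / 2) * q z + L * ε / 2 + ‖y‖ * ε := by

  have hNpos : (0:ℝ) < N := by exact_mod_cast hN
  set F : S → ℝ := fun σ => H σ - ((N : ℝ) / 2) * q (m σ) + N * ⟪y, m σ⟫_ℝ with hF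
  set C : ℝ := (N : ℝ) * (- ⟪y, z⟫_ℝ + (1 / 2) * q z + L * ε / 2 + ‖y‖ * ε) with hC
  have hAmeas : MeasurableSet A := by
    rw [hA]
    exact measurableSet_le ((hm.sub measurable_const).norm) measurable_const
  -- pointwise bound on A
  have hpt : ∀ σ ∈ A, Real.exp (H σ) ≤ Real.exp C * Real.exp (F σ) := by
    intro σ hσ
    rw [hA] at hσ
    have h1 : ‖m σ - z‖ ≤ ε := hσ
    have h2 : q (m σ) ≤ q z + L * ε := by
      have := hqz (m σ) h1
      linarith [abs_le.mp this |>.2]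
    have h3 : ⟪y, z - m σ⟫_ℝ ≤ ‖y‖ * ε := by
      calc ⟪y, z - m σ⟫_ℝ ≤ ‖y‖ * ‖z - m σ‖ := real_inner_le_norm y _
        _ ≤ ‖y‖ * ε := by
            have : ‖z - m σ‖ = ‖m σ - z‖ := norm_sub_rev _ _
            rw [this]; exact mul_le_mul_of_nonneg_left h1 (norm_nonneg y)
    rw [← Real.exp_add]
    apply Real.exp_le_exp.mpr
    have hinner : ⟪y, z⟫_ℝ - ⟪y, m σ⟫_ℝ ≤ ‖y‖ * ε := by
      rwa [inner_sub_right] at h3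
    have : H σ ≤ C + F σ := by
      rw [hC, hF]
      have expand : (N : ℝ) * (- ⟪y, z⟫_ℝ + (1 / 2) * q z + L * ε / 2 + ‖y‖ * ε)
            + (H σ - ((N : ℝ) / 2) * q (m σ) + N * ⟪y, m σ⟫_ℝ) - H σ
          = ((N:ℝ)/2) * (q z + L * ε - q (m σ))
            + (N:ℝ) * (‖y‖ * ε - (⟪y, z⟫_ℝ - ⟪y, m σ⟫_ℝ)) := by ring
      nlinarith [mul_nonneg (le_of_lt hNpos) (sub_nonneg.mpr hinner),
        mul_nonneg (by positivity : (0:ℝ) ≤ (N:ℝ)/2) (by linarith : (0:ℝ) ≤ q z + L * ε - q (m σ))]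
    linarith
  have hintC : Integrable (fun σ => Real.exp C * Real.exp (F σ)) P := hint.const_mul _
  have step1 : ∫ σ in A, Real.exp (H σ) ∂P ≤ ∫ σ in A, Real.exp C * Real.exp (F σ) ∂P := by
    apply setIntegral_mono_on _ (hintC.integrableOn) hAmeas hpt
    · refine Integrable.mono' hintC.integrableOn ?_ ?_
      · exact (hH.exp.aestronglyMeasurable)
      · filter_upwards [MeasureTheory.ae_restrict_mem hAmeas] with σ hσ
        rw [Real.norm_eq_abs, abs_of_pos (Real.exp_pos _)]
        exact hpt σ hσ
  have step2 : ∫ σ in A, Real.exp C * Real.exp (F σ) ∂P ≤ ∫ σ, Real.exp C * Real.exp (F σ) ∂P := by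
    apply setIntegral_le_integral hintC
    filter_upwards with σ
    positivity
  have key : ∫ σ in A, Real.exp (H σ) ∂P ≤ Real.exp C * ∫ σ, Real.exp (F σ) ∂P := by
    calc ∫ σ in A, Real.exp (H σ) ∂P ≤ ∫ σ, Real.exp C * Real.exp (F σ) ∂P :=
          le_trans step1 step2
      _ = Real.exp C * ∫ σ, Real.exp (F σ) ∂P := integral_const_mul _ _
  have hlog : Real.log (∫ σ in A, Real.exp (H σ) ∂P)
      ≤ C + Real.log (∫ σ, Real.exp (F σ) ∂P) := by
    calc Real.log (∫ σ in A, Real.exp (H σ) ∂P)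
        ≤ Real.log (Real.exp C * ∫ σ, Real.exp (F σ) ∂P) := Real.log_le_log hpos key
      _ = C + Real.log (∫ σ, Real.exp (F σ) ∂P) := by
          rw [Real.log_mul (Real.exp_ne_zero _) (ne_of_gt hpos2), Real.log_exp]
  have := mul_le_mul_of_nonneg_left hlog (by positivity : (0:ℝ) ≤ 1 / (N:ℝ))
  have hCN : (1 / (N:ℝ)) * C = - ⟪y, z⟫_ℝ + (1 / 2) * q z + L * ε / 2 + ‖y‖ * ε := by
    rw [hC]; field_simp
  calc (1 / (N : ℝ)) * Real.log (∫ σ in A, Real.exp (H σ) ∂P)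
      ≤ (1 / (N:ℝ)) * (C + Real.log (∫ σ, Real.exp (F σ) ∂P)) := this
    _ = (1 / (N:ℝ)) * Real.log (∫ σ, Real.exp (F σ) ∂P) + (1 / (N:ℝ)) * C := by ring
    _ = (1 / (N : ℝ)) * Real.log (∫ σ, Real.exp (F σ) ∂P)
        - ⟪y, z⟫_ℝ + (1 / 2) * q z + L * ε / 2 + ‖y‖ * ε := by rw [hCN]; ring
end
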